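/- arXiv:math/0208152 — 5 statements merged into one kernel-verified Lean document; each statement's English description precedes it below -/
import Mathlib

section
/- Let R be an ℕ-graded k-algebra and x ∈ R_1 a regular homogeneous normal element. Let Dhom(R,x) denote the degree-zero component S_0 of the ℤ-graded localization S = R[x^{-1}], and let σ denote the automorphism of S_0 induced by conjugation s ↦ xsx^{-1}. Then there is a k-algebra isomorphism θ : Dhom(R,x)[y, y^{-1}; σ] → R[x^{-1}] which is the identity on Dhom(R,x) and sends y to x. -/
/-- Dehomogenisation: if `R` is an `ℕ`-graded `k`-algebra, `x ∈ R₁` a regular normal element,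
`S = R[x⁻¹]` the localization (modelled by `f : R →ₐ[k] S` inverting `x` with every element a
fraction), `S₀ = Dhom(R,x) = ∪_t R_t x^{-t}` the degree-zero subalgebra, `σ` the automorphism
of `S₀` given by conjugation by `x`, then any skew-Laurent extension `L = S₀[y,y⁻¹;σ]`
(modelled by `ι : S₀ → L`, a unit `u` with `u ι(s) = ι(σ s) u` and `(u^n)_{n∈ℤ}` a left
`S₀`-basis of `L`) is isomorphic to `S` via an isomorphism fixing `S₀` and sending `y` to `x`. -/
theorem stmt5 {k R S L : Type*} [Field k] [Ring R] [Ring S] [Ring L]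
    [Algebra k R] [Algebra k S] [Algebra k L]
    (𝒜 : ℕ → Submodule k R) [GradedAlgebra 𝒜]
    (x : R) (hx1 : x ∈ 𝒜 1) (hxreg : IsRegular x)
    (hxn : ∀ r : R, ∃ r' : R, x * r = r' * x) (hxn' : ∀ r : R, ∃ r' : R, r * x = x * r')
    (f : R →ₐ[k] S) (hinj : Function.Injective f)
    (v : S) (hv : f x * v = 1) (hv' : v * f x = 1)
    (hfrac : ∀ s : S, ∃ (t : ℕ) (r : R), s * (f x) ^ t = f r)
    (S₀ : Subalgebra k S)
    (hS₀ : ∀ s : S, s ∈ S₀ ↔ ∃ (t : ℕ) (r : R), r ∈ 𝒜 t ∧ s = f r * v ^ t)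
    (σ : S₀ ≃ₐ[k] S₀) (hσ : ∀ s : S₀, (σ s : S) = f x * (s : S) * v)
    (ι : S₀ →ₐ[k] L) (u : Lˣ)
    (hcomm : ∀ s : S₀, (u : L) * ι s = ι (σ s) * (u : L))
    (hbasis : ∀ a : L, ∃! c : ℤ →₀ S₀, a = c.sum fun n s => ι s * ((u ^ n : Lˣ) : L)) :
    ∃ θ : L ≃ₐ[k] S, (∀ s : S₀, θ (ι s) = (s : S)) ∧ θ (u : L) = f x := by
  classical
  set ux : Sˣ := ⟨f x, v, hv, hv'⟩ with hux
  have hfx : f x = (ux : S) := rfl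
  have hvx : v = ((ux⁻¹ : Sˣ) : S) := rfl
  have coe_pow : ∀ m : ℕ, ((ux ^ (m : ℤ) : Sˣ) : S) = f (x ^ m) := by
    intro m
    rw [zpow_natCast, Units.val_pow_eq_pow_val, map_pow]
  have hvpow : ∀ m : ℕ, v ^ m = ((ux ^ (-(m : ℤ)) : Sˣ) : S) := by
    intro m
    rw [zpow_neg, zpow_natCast, ← inv_pow, Units.val_pow_eq_pow_val]
    rfl
  -- the inverse commutation relations
  have hcomm' : ∀ s : S₀, ((u⁻¹ : Lˣ) : L) * ι s = ι (σ⁻¹ s) * ((u⁻¹ : Lˣ) : L) := by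
    intro s
    have h1 : (u : L) * ι (σ⁻¹ s) = ι s * (u : L) := by
      have h := hcomm (σ⁻¹ s)
      have h2 : σ (σ⁻¹ s) = s := by
        show σ (σ.symm s) = s
        exact σ.apply_symm_apply s
      rwa [h2] at h
    calc ((u⁻¹ : Lˣ) : L) * ι s
        = ((u⁻¹ : Lˣ) : L) * (ι s * (u : L)) * ((u⁻¹ : Lˣ) : L) := by
          rw [mul_assoc, mul_assoc, Units.mul_inv, mul_one]
      _ = ((u⁻¹ : Lˣ) : L) * ((u : L) * ι (σ⁻¹ s)) * ((u⁻¹ : Lˣ) : L) := by rw [h1]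
      _ = ι (σ⁻¹ s) * ((u⁻¹ : Lˣ) : L) := by rw [Units.inv_mul_cancel_left]
  have hσ' : ∀ s : S₀, ((σ⁻¹ s : S₀) : S)
      = ((ux⁻¹ : Sˣ) : S) * (s : S) * ((ux : Sˣ) : S) := by
    intro s
    have h1 : (s : S) = (ux : S) * ((σ⁻¹ s : S₀) : S) * ((ux⁻¹ : Sˣ) : S) := by
      have h := hσ (σ⁻¹ s)
      have h2 : σ (σ⁻¹ s) = s := by
        show σ (σ.symm s) = s
        exact σ.apply_symm_apply s
      rw [h2] at h
      rw [h, hfx, hvx]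
    rw [h1, mul_assoc ((ux : Sˣ) : S), Units.inv_mul_cancel_left, Units.inv_mul_cancel_right]
  -- conjugation lemmas for arbitrary integer powers
  have hconjL : ∀ (n : ℤ) (s : S₀),
      ((u ^ n : Lˣ) : L) * ι s = ι ((σ ^ n) s) * ((u ^ n : Lˣ) : L) := by
    intro n
    induction n using Int.induction_on with
    | zero => intro s; simp
    | succ i ih =>
      intro s
      have hu : (u ^ ((i : ℤ) + 1) : Lˣ) = u ^ (i : ℤ) * u := zpow_add_one u i
      have hσ1 : (σ ^ ((i : ℤ) + 1)) s = (σ ^ (i : ℤ)) (σ s) := by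
        rw [zpow_add_one, AlgEquiv.mul_apply]
      rw [hu, Units.val_mul, mul_assoc, hcomm s, ← mul_assoc, ih (σ s), hσ1, mul_assoc]
    | pred i ih =>
      intro s
      have hu : (u ^ (-(i : ℤ) - 1) : Lˣ) = u ^ (-(i : ℤ)) * u⁻¹ := zpow_sub_one u _
      have hσ1 : (σ ^ (-(i : ℤ) - 1)) s = (σ ^ (-(i : ℤ))) (σ⁻¹ s) := by
        rw [zpow_sub_one, AlgEquiv.mul_apply]
      rw [hu, Units.val_mul, mul_assoc, hcomm' s, ← mul_assoc, ih (σ⁻¹ s), hσ1, mul_assoc]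
  have hconjS : ∀ (n : ℤ) (s : S₀),
      (((σ ^ n) s : S₀) : S)
        = ((ux ^ n : Sˣ) : S) * (s : S) * (((ux ^ n)⁻¹ : Sˣ) : S) := by
    intro n
    induction n using Int.induction_on with
    | zero => intro s; simp
    | succ i ih =>
      intro s
      have hσ1 : (σ ^ ((i : ℤ) + 1)) s = (σ ^ (i : ℤ)) (σ s) := by
        rw [zpow_add_one, AlgEquiv.mul_apply]
      rw [hσ1, ih (σ s), hσ s, hfx, hvx, zpow_add_one, mul_inv_rev, Units.val_mul,
        Units.val_mul]
      simp only [mul_assoc]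
    | pred i ih =>
      intro s
      have hσ1 : (σ ^ (-(i : ℤ) - 1)) s = (σ ^ (-(i : ℤ))) (σ⁻¹ s) := by
        rw [zpow_sub_one, AlgEquiv.mul_apply]
      rw [hσ1, ih (σ⁻¹ s), hσ' s, zpow_sub_one, mul_inv_rev, inv_inv, Units.val_mul,
        Units.val_mul]
      simp only [mul_assoc]
  -- the underlying function of the isomorphism
  set θfun : L → S :=
    fun a => ((hbasis a).choose).sum fun n s => (s : S) * ((ux ^ n : Sˣ) : S) with hθfun
  have hrepr : ∀ (a : L) (c : ℤ →₀ S₀),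
      a = (c.sum fun n s => ι s * ((u ^ n : Lˣ) : L)) → (hbasis a).choose = c :=
    fun a c h => ((hbasis a).choose_spec.2 c h).symm
  have hθsum : ∀ c : ℤ →₀ S₀,
      θfun (c.sum fun n s => ι s * ((u ^ n : Lˣ) : L))
        = c.sum fun n s => (s : S) * ((ux ^ n : Sˣ) : S) := by
    intro c
    have h := hrepr _ c rfl
    simp only [hθfun]
    rw [h]
  have hθsingle : ∀ (n : ℤ) (s : S₀),
      θfun (ι s * ((u ^ n : Lˣ) : L)) = (s : S) * ((ux ^ n : Sˣ) : S) := by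
    intro n s
    have h1 : ι s * ((u ^ n : Lˣ) : L)
        = (Finsupp.single n s).sum fun m t => ι t * ((u ^ m : Lˣ) : L) := by
      rw [Finsupp.sum_single_index (by simp)]
    rw [h1, hθsum, Finsupp.sum_single_index (by simp)]
  have hθzero : θfun 0 = 0 := by
    have h0 : (0 : L) = (0 : ℤ →₀ S₀).sum fun n s => ι s * ((u ^ n : Lˣ) : L) := by
      rw [Finsupp.sum_zero_index]
    rw [h0, hθsum, Finsupp.sum_zero_index]
  have hθadd : ∀ a b : L, θfun (a + b) = θfun a + θfun b := by
    intro a b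
    obtain ⟨ha, -⟩ := (hbasis a).choose_spec
    obtain ⟨hb, -⟩ := (hbasis b).choose_spec
    rw [ha, hb, ← Finsupp.sum_add_index' (by simp) (by intro i b₁ b₂; rw [map_add, add_mul]),
      hθsum, hθsum, hθsum,
      Finsupp.sum_add_index' (by simp) (by intro i b₁ b₂; push_cast; rw [add_mul])]
  -- additive-monoid-hom version, for summing
  have hθFinset : ∀ {α : Type} (T : Finset α) (g : α → L),
      θfun (∑ i ∈ T, g i) = ∑ i ∈ T, θfun (g i) := by
    intro α T g
    exact map_sum (AddMonoidHom.mk' θfun hθadd) g T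
  have hθmul : ∀ a b : L, θfun (a * b) = θfun a * θfun b := by
    intro a b
    obtain ⟨ha, -⟩ := (hbasis a).choose_spec
    obtain ⟨hb, -⟩ := (hbasis b).choose_spec
    set ca := (hbasis a).choose with hca
    set cb := (hbasis b).choose with hcb
    have hab : a * b = ∑ n ∈ ca.support, ∑ m ∈ cb.support,
        ι (ca n * (σ ^ n) (cb m)) * ((u ^ (n + m) : Lˣ) : L) := by
      conv_lhs => rw [ha, hb]
      rw [Finsupp.sum, Finsupp.sum, Finset.sum_mul]
      refine Finset.sum_congr rfl fun n _ => ?_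
      rw [Finset.mul_sum]
      refine Finset.sum_congr rfl fun m _ => ?_
      simp only [map_mul, zpow_add, Units.val_mul, mul_assoc]
      rw [← mul_assoc ((u ^ n : Lˣ) : L), hconjL n (cb m), mul_assoc]
    have hA : θfun a = ∑ n ∈ ca.support, ((ca n : S) * ((ux ^ n : Sˣ) : S)) := by
      conv_lhs => rw [ha]
      rw [hθsum]
      rfl
    have hB : θfun b = ∑ m ∈ cb.support, ((cb m : S) * ((ux ^ m : Sˣ) : S)) := by
      conv_lhs => rw [hb]
      rw [hθsum]
      rfl
    rw [hab, hθFinset, hA, hB, Finset.sum_mul]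
    refine Finset.sum_congr rfl fun n hn => ?_
    rw [hθFinset, Finset.mul_sum]
    refine Finset.sum_congr rfl fun m hm => ?_
    rw [hθsingle, MulMemClass.coe_mul, hconjS n (cb m)]
    have h3 : ((ux ^ n : Sˣ)⁻¹ : Sˣ) * ux ^ (n + m) = ux ^ m := by
      rw [← zpow_neg, ← zpow_add, neg_add_cancel_left]
    simp only [mul_assoc]
    rw [← Units.val_mul, h3]
  have hθone : θfun 1 = 1 := by
    have h1 : (1 : L) = ι 1 * ((u ^ (0 : ℤ) : Lˣ) : L) := by simp
    rw [h1, hθsingle]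
    simp
  have hθcomm : ∀ a : k, θfun (algebraMap k L a) = algebraMap k S a := by
    intro a
    have h1 : algebraMap k L a = ι (algebraMap k S₀ a) * ((u ^ (0 : ℤ) : Lˣ) : L) := by
      simp
    rw [h1, hθsingle]
    simp
  -- injectivity: linear independence of the powers of `ux` over `S₀`
  have hindep : ∀ c : ℤ →₀ S₀,
      (c.sum fun n s => (s : S) * ((ux ^ n : Sˣ) : S)) = 0 → c = 0 := by
    intro c hc
    choose t r hmem heq using fun n => (hS₀ (c n)).mp (c n).2
    set N : ℕ := c.support.sup fun n => t n + n.natAbs with hN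
    have hNle : ∀ n ∈ c.support, (t n : ℤ) ≤ n + N ∧ 0 ≤ n + (N : ℤ) := by
      intro n hn
      have h1 : t n + n.natAbs ≤ N := Finset.le_sup (f := fun n => t n + n.natAbs) hn
      omega
    set e : ℤ → ℕ := fun n => (n + N - t n).toNat with he
    have key : ∀ n ∈ c.support,
        (c n : S) * ((ux ^ (n + (N : ℤ)) : Sˣ) : S) = f (r n * x ^ e n) := by
      intro n hn
      have h1 := hNle n hn
      rw [heq n, hvpow (t n), mul_assoc, ← Units.val_mul, ← zpow_add]
      have h2 : (-(t n : ℤ)) + (n + N) = (e n : ℤ) := by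
        simp only [he]
        omega
      rw [h2, coe_pow, ← map_mul]
    have step1 : (c.sum fun n s => ((s : S) * ((ux ^ n : Sˣ) : S))
        * ((ux ^ (N : ℤ) : Sˣ) : S)) = 0 := by
      rw [← Finsupp.sum_mul, hc, zero_mul]
    rw [Finsupp.sum] at step1
    have step2 : ∑ n ∈ c.support, f (r n * x ^ e n) = 0 := by
      rw [← step1]
      refine Finset.sum_congr rfl fun n hn => ?_
      rw [← key n hn, mul_assoc, ← Units.val_mul, ← zpow_add]
    have hsum0 : ∑ n ∈ c.support, (r n * x ^ e n) = 0 := by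
      apply hinj
      rw [map_sum, map_zero]
      exact step2
    have hmem' : ∀ n ∈ c.support, r n * x ^ e n ∈ 𝒜 ((n + N).toNat) := by
      intro n hn
      have hxe : x ^ e n ∈ 𝒜 (e n) := by
        simpa using SetLike.pow_mem_graded (e n) hx1
      have h1 := SetLike.mul_mem_graded (hmem n) hxe
      have h2 : t n + e n = (n + (N : ℤ)).toNat := by
        have h3 := hNle n hn
        simp only [he]
        omega
      rw [← h2]
      exact h1
    have hzero : ∀ n ∈ c.support, c n = 0 := by
      intro n hn
      have h2 := congrArg (GradedRing.proj 𝒜 ((n + (N : ℤ)).toNat)) hsum0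
      rw [map_sum, map_zero] at h2
      have h3 : ∀ m ∈ c.support, m ≠ n →
          GradedRing.proj 𝒜 ((n + (N : ℤ)).toNat) (r m * x ^ e m) = 0 := by
        intro m hm hmn
        rw [GradedRing.proj_apply]
        refine DirectSum.decompose_of_mem_ne 𝒜 (hmem' m hm) ?_
        have h4 := hNle m hm
        have h5 := hNle n hn
        omega
      have h4 : GradedRing.proj 𝒜 ((n + (N : ℤ)).toNat) (r n * x ^ e n) = r n * x ^ e n := by
        rw [GradedRing.proj_apply]
        exact DirectSum.decompose_of_mem_same 𝒜 (hmem' n hn)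
      rw [Finset.sum_eq_single_of_mem n hn h3, h4] at h2
      have h6 : r n = 0 := hxreg.right.pow (e n)
        (show r n * x ^ e n = 0 * x ^ e n by rw [zero_mul]; exact h2)
      have h7 : (c n : S) = 0 := by rw [heq n, h6, map_zero, zero_mul]
      exact_mod_cast h7
    refine Finsupp.ext fun n => ?_
    by_cases hn : n ∈ c.support
    · simpa using hzero n hn
    · simpa using Finsupp.notMem_support_iff.mp hn
  -- surjectivity
  have hsurj : ∀ s : S, ∃ a : L, θfun a = s := by
    intro s
    obtain ⟨m, w, hw⟩ := hfrac s
    have hs : s = f w * ((ux ^ (-(m : ℤ)) : Sˣ) : S) := by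
      rw [← hw, hfx, ← Units.val_pow_eq_pow_val, zpow_neg, zpow_natCast,
        mul_assoc, Units.mul_inv, mul_one]
    have hmemS₀ : ∀ i : ℕ, f ((DirectSum.decompose 𝒜 w i : R)) * v ^ i ∈ S₀ := fun i =>
      (hS₀ _).mpr ⟨i, _, (DirectSum.decompose 𝒜 w i).2, rfl⟩
    refine ⟨∑ i ∈ (DirectSum.decompose 𝒜 w).support,
      ι ⟨_, hmemS₀ i⟩ * ((u ^ ((i : ℤ) - m) : Lˣ) : L), ?_⟩
    rw [hθFinset, hs]
    have hw2 : f w = ∑ i ∈ (DirectSum.decompose 𝒜 w).support,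
        f ((DirectSum.decompose 𝒜 w i : R)) := by
      rw [← map_sum, DirectSum.sum_support_decompose 𝒜 w]
    rw [hw2, Finset.sum_mul]
    refine Finset.sum_congr rfl fun i hi => ?_
    rw [hθsingle]
    show (f ((DirectSum.decompose 𝒜 w i : R)) * v ^ i) * _ = _
    rw [hvpow i, mul_assoc, ← Units.val_mul, ← zpow_add,
      show (-(i : ℤ)) + ((i : ℤ) - m) = -(m : ℤ) by ring]
  -- assemble the algebra homomorphism
  let θhom : L →ₐ[k] S :=
    { toFun := θfun
      map_one' := hθone
      map_mul' := hθmul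
      map_zero' := hθzero
      map_add' := hθadd
      commutes' := hθcomm }
  have hbij : Function.Bijective θhom := by
    constructor
    · rw [injective_iff_map_eq_zero]
      intro a ha
      obtain ⟨ha1, -⟩ := (hbasis a).choose_spec
      have h0 : (hbasis a).choose = 0 := by
        refine hindep _ ?_
        rw [← hθsum (hbasis a).choose, ← ha1]
        exact ha
      rw [ha1, h0, Finsupp.sum_zero_index]
    · intro s
      exact hsurj s
  refine ⟨AlgEquiv.ofBijective θhom hbij, ?_, ?_⟩
  · intro s
    show θfun (ι s) = (s : S)
    have h1 : ι s = ι s * ((u ^ (0 : ℤ) : Lˣ) : L) := by simp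
    rw [h1, hθsingle]
    simp
  · show θfun (u : L) = f x
    have h1 : (u : L) = ι 1 * ((u ^ (1 : ℤ) : Lˣ) : L) := by simp
    rw [h1, hθsingle]
    rw [OneMemClass.coe_one, one_mul, zpow_one]
end

section
/- Let R be an ℕ-graded k-algebra and x ∈ R_1 a regular homogeneous normal element. Then R is a domain if and only if the dehomogenisation Dhom(R,x) (the degree-zero subalgebra of R[x^{-1}]) is a domain. -/
/-- `R` is a domain iff its dehomogenisation `Dhom(R,x)` (the degree-zero subalgebra `S₀`
of the localization `S = R[x⁻¹]`) is a domain. -/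
theorem stmt6 {k R S : Type*} [Field k] [Ring R] [Ring S] [Algebra k R] [Algebra k S]
    (𝒜 : ℕ → Submodule k R) [GradedAlgebra 𝒜]
    (x : R) (hx1 : x ∈ 𝒜 1) (hxreg : IsRegular x)
    (hxn : ∀ r : R, ∃ r' : R, x * r = r' * x) (hxn' : ∀ r : R, ∃ r' : R, r * x = x * r')
    (f : R →ₐ[k] S) (hinj : Function.Injective f)
    (v : S) (hv : f x * v = 1) (hv' : v * f x = 1)
    (hfrac : ∀ s : S, ∃ (t : ℕ) (r : R), s * (f x) ^ t = f r)
    (S₀ : Subalgebra k S)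
    (hS₀ : ∀ s : S, s ∈ S₀ ↔ ∃ (t : ℕ) (r : R), r ∈ 𝒜 t ∧ s = f r * v ^ t) :
    IsDomain R ↔ IsDomain S₀ := by
  classical
  -- the "conjugation" maps coming from normality of `x`
  set τ : R → R := fun r => (hxn' r).choose with hτdef
  have hτ : ∀ r, r * x = x * τ r := fun r => (hxn' r).choose_spec
  set σ : R → R := fun r => (hxn r).choose with hσdef
  have hσ : ∀ r, x * r = σ r * x := fun r => (hxn r).choose_spec
  have hτ0 : ∀ r, τ r = 0 → r = 0 := by
    intro r h
    exact hxreg.right (show r * x = 0 * x by rw [hτ r, h, mul_zero, zero_mul])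
  have hσ0 : ∀ r, σ r = 0 → r = 0 := by
    intro r h
    exact hxreg.left (show x * r = x * 0 by rw [hσ r, h, zero_mul, mul_zero])
  have hτ0t : ∀ (t : ℕ) (r : R), τ^[t] r = 0 → r = 0 := by
    intro t
    induction t with
    | zero => intro r h; exact h
    | succ t ih =>
      intro r h
      rw [Function.iterate_succ_apply] at h
      exact hτ0 r (ih _ h)
  have hσ0t : ∀ (t : ℕ) (r : R), σ^[t] r = 0 → r = 0 := by
    intro t
    induction t with
    | zero => intro r h; exact h
    | succ t ih =>
      intro r h
      rw [Function.iterate_succ_apply] at h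
      exact hσ0 r (ih _ h)
  have hτσ : ∀ r, τ (σ r) = r := by
    intro r
    exact hxreg.left (show x * τ (σ r) = x * r by rw [← hτ (σ r), hσ r])
  have hτσt : ∀ (t : ℕ) (r : R), τ^[t] (σ^[t] r) = r := by
    intro t
    induction t with
    | zero => intro r; rfl
    | succ t ih =>
      intro r
      rw [Function.iterate_succ_apply' σ, Function.iterate_succ_apply τ, hτσ, ih]
  have hσmem : ∀ {m : ℕ} {r : R}, r ∈ 𝒜 m → σ r ∈ 𝒜 m := by
    intro m r hr
    have h1 : σ r * x ∈ 𝒜 (m + 1) := by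
      rw [← hσ]
      have := SetLike.mul_mem_graded hx1 hr
      rwa [add_comm] at this
    have h2 : (DirectSum.decompose 𝒜 (σ r * x) (m + 1) : R) = σ r * x :=
      DirectSum.decompose_of_mem_same 𝒜 h1
    have h3 : (DirectSum.decompose 𝒜 (σ r * x) (m + 1) : R)
        = (DirectSum.decompose 𝒜 (σ r) m : R) * x :=
      DirectSum.coe_decompose_mul_add_of_right_mem 𝒜 hx1
    have h4 : σ r = (DirectSum.decompose 𝒜 (σ r) m : R) :=
      hxreg.right (show σ r * x = (DirectSum.decompose 𝒜 (σ r) m : R) * x by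
        rw [← h3, h2])
    rw [h4]
    exact SetLike.coe_mem _
  have hσmemt : ∀ (t : ℕ) {m : ℕ} {r : R}, r ∈ 𝒜 m → σ^[t] r ∈ 𝒜 m := by
    intro t
    induction t with
    | zero => intro m r hr; exact hr
    | succ t ih =>
      intro m r hr
      rw [Function.iterate_succ_apply]
      exact ih (hσmem hr)
  -- `S`-side commutation facts
  have hfx : ∀ c : R, f c * f x = f x * f (τ c) := by
    intro c
    rw [← map_mul, ← map_mul, hτ]
  have hvf : ∀ c : R, v * f c = f (τ c) * v := by
    intro c
    calc v * f c = v * f c * (f x * v) := by rw [hv, mul_one]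
      _ = v * (f c * f x) * v := by rw [← mul_assoc, mul_assoc v (f c) (f x)]
      _ = v * (f x * f (τ c)) * v := by rw [hfx]
      _ = (v * f x) * (f (τ c) * v) := by rw [← mul_assoc, mul_assoc (v * f x)]
      _ = f (τ c) * v := by rw [hv', one_mul]
  have hvft : ∀ (t : ℕ) (c : R), v ^ t * f c = f (τ^[t] c) * v ^ t := by
    intro t
    induction t with
    | zero => intro c; simp
    | succ t ih =>
      intro c
      calc v ^ (t + 1) * f c = v ^ t * (v * f c) := by rw [pow_succ, mul_assoc]
        _ = v ^ t * (f (τ c) * v) := by rw [hvf]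
        _ = (v ^ t * f (τ c)) * v := by rw [mul_assoc]
        _ = f (τ^[t] (τ c)) * v ^ t * v := by rw [ih]
        _ = f (τ^[t + 1] c) * v ^ (t + 1) := by
            rw [Function.iterate_succ_apply, mul_assoc, ← pow_succ]
  have hfxt : ∀ (t : ℕ) (c : R), f c * (f x) ^ t = (f x) ^ t * f (τ^[t] c) := by
    intro t
    induction t with
    | zero => intro c; simp
    | succ t ih =>
      intro c
      calc f c * (f x) ^ (t + 1) = (f c * f x) * (f x) ^ t := by
            rw [pow_succ', ← mul_assoc]
        _ = f x * (f (τ c) * (f x) ^ t) := by rw [hfx, mul_assoc]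
        _ = f x * ((f x) ^ t * f (τ^[t] (τ c))) := by rw [ih]
        _ = (f x) ^ (t + 1) * f (τ^[t + 1] c) := by
            rw [← mul_assoc, ← pow_succ', Function.iterate_succ_apply]
  have hfxv : ∀ t : ℕ, (f x) ^ t * v ^ t = 1 := by
    intro t
    induction t with
    | zero => simp
    | succ t ih =>
      calc (f x) ^ (t + 1) * v ^ (t + 1) = (f x) ^ t * ((f x * v) * v ^ t) := by
            rw [pow_succ, pow_succ', mul_assoc, mul_assoc]
        _ = (f x) ^ t * v ^ t := by rw [hv, one_mul]
        _ = 1 := ih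
  have hvfx : ∀ t : ℕ, v ^ t * (f x) ^ t = 1 := by
    intro t
    induction t with
    | zero => simp
    | succ t ih =>
      calc v ^ (t + 1) * (f x) ^ (t + 1) = v ^ t * ((v * f x) * (f x) ^ t) := by
            rw [pow_succ, pow_succ', mul_assoc, mul_assoc]
        _ = v ^ t * (f x) ^ t := by rw [hv', one_mul]
        _ = 1 := ih
  have hfker : ∀ r : R, f r = 0 → r = 0 := by
    intro r h
    exact hinj (show f r = f 0 by rw [h, map_zero])
  constructor
  · -- forward: `R` domain implies `S₀` domain
    intro hR
    haveI := hR
    have hSnzd : ∀ s s' : S, s * s' = 0 → s = 0 ∨ s' = 0 := by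
      intro s s' hss
      obtain ⟨t, r, hr⟩ := hfrac s
      obtain ⟨t', r', hr'⟩ := hfrac s'
      have h1 : s * f r' = 0 := by
        rw [← hr', ← mul_assoc, hss, zero_mul]
      have h2 : f (r * τ^[t] r') = 0 := by
        rw [map_mul, ← hr, mul_assoc, ← hfxt, ← mul_assoc, h1, zero_mul]
      rcases mul_eq_zero.mp (hfker _ h2) with h3 | h3
      · left
        have : s * (f x) ^ t = 0 := by rw [hr, h3, map_zero]
        calc s = s * ((f x) ^ t * v ^ t) := by rw [hfxv, mul_one]
          _ = (s * (f x) ^ t) * v ^ t := by rw [mul_assoc]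
          _ = 0 := by rw [this, zero_mul]
      · right
        have h4 : r' = 0 := hτ0t t r' h3
        have : s' * (f x) ^ t' = 0 := by rw [hr', h4, map_zero]
        calc s' = s' * ((f x) ^ t' * v ^ t') := by rw [hfxv, mul_one]
          _ = (s' * (f x) ^ t') * v ^ t' := by rw [mul_assoc]
          _ = 0 := by rw [this, zero_mul]
    haveI : Nontrivial S₀ := by
      refine ⟨0, 1, fun h => ?_⟩
      have h1 : ((0 : S₀) : S) = ((1 : S₀) : S) := congrArg Subtype.val h
      rw [ZeroMemClass.coe_zero, OneMemClass.coe_one] at h1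
      have h2 : f 0 = f 1 := by rw [map_zero, map_one, h1]
      exact zero_ne_one (hinj h2)
    haveI : NoZeroDivisors S₀ := by
      refine ⟨fun {a b} hab => ?_⟩
      have h1 : (a : S) * (b : S) = 0 := by
        have := congrArg Subtype.val hab
        simpa using this
      rcases hSnzd _ _ h1 with h | h
      · left; exact Subtype.ext (by simpa using h)
      · right; exact Subtype.ext (by simpa using h)
    exact NoZeroDivisors.to_isDomain S₀
  · -- reverse: `S₀` domain implies `R` domain
    intro hS
    haveI := hS
    haveI : Nontrivial R := by
      refine ⟨1, 0, fun h => ?_⟩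
      have h1 : (1 : S₀) = 0 := by
        apply Subtype.ext
        rw [OneMemClass.coe_one, ZeroMemClass.coe_zero]
        calc (1 : S) = f 1 := (map_one f).symm
          _ = f 0 := by rw [h]
          _ = 0 := map_zero f
      exact one_ne_zero h1
    -- key: homogeneous elements multiply to nonzero
    have hkey : ∀ (n m : ℕ) (a b : R), a ∈ 𝒜 n → b ∈ 𝒜 m → a * b = 0 →
        a = 0 ∨ b = 0 := by
      intro n m a b ha hb hab
      by_contra hcon
      push_neg at hcon
      obtain ⟨ha0, hb0⟩ := hcon
      set b' : R := σ^[n] b with hb'def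
      have hb'm : b' ∈ 𝒜 m := hσmemt n hb
      have hAmem : f a * v ^ n ∈ S₀ := (hS₀ _).mpr ⟨n, a, ha, rfl⟩
      have hBmem : f b' * v ^ m ∈ S₀ := (hS₀ _).mpr ⟨m, b', hb'm, rfl⟩
      have hprod : (f a * v ^ n) * (f b' * v ^ m) = 0 := by
        have h1 : v ^ n * f b' = f b * v ^ n := by
          rw [hvft n b', hb'def, hτσt n b]
        calc (f a * v ^ n) * (f b' * v ^ m)
            = f a * (v ^ n * f b') * v ^ m := by
              rw [mul_assoc (f a), ← mul_assoc (v ^ n), ← mul_assoc]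
          _ = f a * (f b * v ^ n) * v ^ m := by rw [h1]
          _ = f (a * b) * (v ^ n * v ^ m) := by
              rw [map_mul, ← mul_assoc (f a), mul_assoc (f a * f b)]
          _ = 0 := by rw [hab, map_zero, zero_mul]
      have hab0 : (⟨_, hAmem⟩ * ⟨_, hBmem⟩ : S₀) = 0 := by
        apply Subtype.ext
        simpa using hprod
      rcases mul_eq_zero.mp hab0 with hA | hB
      · have h1 : f a * v ^ n = 0 := by
          have := congrArg Subtype.val hA
          simpa using this
        have h2 : f a = 0 := by
          calc f a = (f a * v ^ n) * (f x) ^ n := by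
                rw [mul_assoc, hvfx, mul_one]
            _ = 0 := by rw [h1, zero_mul]
        exact ha0 (hfker a h2)
      · have h1 : f b' * v ^ m = 0 := by
          have := congrArg Subtype.val hB
          simpa using this
        have h2 : f b' = 0 := by
          calc f b' = (f b' * v ^ m) * (f x) ^ m := by
                rw [mul_assoc, hvfx, mul_one]
            _ = 0 := by rw [h1, zero_mul]
        exact hb0 (hσ0t n b (hfker b' h2))
    -- reduce to homogeneous components via top-degree terms
    have hmax : ∀ a b : R, a ≠ 0 → b ≠ 0 → a * b = 0 → False := by
      intro a b ha hb hab
      have hda : (DirectSum.decompose 𝒜 a).support.Nonempty := by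
        rw [Finset.nonempty_iff_ne_empty, Ne, DFinsupp.support_eq_empty]
        intro h
        exact ha ((DirectSum.decompose 𝒜).injective
          (by rw [h, DirectSum.decompose_zero]))
      have hdb : (DirectSum.decompose 𝒜 b).support.Nonempty := by
        rw [Finset.nonempty_iff_ne_empty, Ne, DFinsupp.support_eq_empty]
        intro h
        exact hb ((DirectSum.decompose 𝒜).injective
          (by rw [h, DirectSum.decompose_zero]))
      set n := (DirectSum.decompose 𝒜 a).support.max' hda with hn
      set m := (DirectSum.decompose 𝒜 b).support.max' hdb with hm
      have hnmem := (DirectSum.decompose 𝒜 a).support.max'_mem hda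
      have hmmem := (DirectSum.decompose 𝒜 b).support.max'_mem hdb
      have han0 : (DirectSum.decompose 𝒜 a n : R) ≠ 0 := by
        intro h
        exact DFinsupp.mem_support_iff.mp hnmem (Subtype.ext h)
      have hbm0 : (DirectSum.decompose 𝒜 b m : R) ≠ 0 := by
        intro h
        exact DFinsupp.mem_support_iff.mp hmmem (Subtype.ext h)
      have hfilter : ((DirectSum.decompose 𝒜 a).support ×ˢ
            (DirectSum.decompose 𝒜 b).support).filter
            (fun ij : ℕ × ℕ => ij.1 + ij.2 = n + m) = {(n, m)} := by
        ext ⟨i, j⟩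
        simp only [Finset.mem_filter, Finset.mem_product, Finset.mem_singleton,
          Prod.mk.injEq]
        constructor
        · rintro ⟨⟨hi, hj⟩, hij⟩
          have h1 : i ≤ n := Finset.le_max' _ _ hi
          have h2 : j ≤ m := Finset.le_max' _ _ hj
          omega
        · rintro ⟨rfl, rfl⟩
          exact ⟨⟨hnmem, hmmem⟩, rfl⟩
      have h0 : ((DirectSum.decompose 𝒜 a * DirectSum.decompose 𝒜 b) (n + m) : R)
          = 0 := by
        rw [← DirectSum.decompose_mul, hab, DirectSum.decompose_zero]
        simp
      rw [DirectSum.coe_mul_apply, hfilter, Finset.sum_singleton] at h0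
      rcases hkey n m _ _ (SetLike.coe_mem _) (SetLike.coe_mem _) h0 with h | h
      · exact han0 h
      · exact hbm0 h
    haveI : NoZeroDivisors R := by
      refine ⟨fun {a b} hab => ?_⟩
      by_contra h
      push_neg at h
      exact hmax a b h.1 h.2 hab
    exact NoZeroDivisors.to_isDomain R
end

section
/- Let R be a noetherian ℕ-graded k-algebra and x ∈ R_1 a regular homogeneous normal element. Then the dehomogenisation Dhom(R,x) is noetherian. -/
/-- If `R` is a noetherian `ℕ`-graded `k`-algebra and `x ∈ R₁` is a regular normal element,
then the dehomogenisation `Dhom(R,x)` (the degree-zero subalgebra `S₀` of the localization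
`S = R[x⁻¹]`) is noetherian. -/
theorem stmt7 {k R S : Type*} [Field k] [Ring R] [Ring S] [Algebra k R] [Algebra k S]
    (𝒜 : ℕ → Submodule k R) [GradedAlgebra 𝒜]
    (hnoeth : IsNoetherianRing R)
    (x : R) (hx1 : x ∈ 𝒜 1) (hxreg : IsRegular x)
    (hxn : ∀ r : R, ∃ r' : R, x * r = r' * x) (hxn' : ∀ r : R, ∃ r' : R, r * x = x * r')
    (f : R →ₐ[k] S) (hinj : Function.Injective f)
    (v : S) (hv : f x * v = 1) (hv' : v * f x = 1)
    (hfrac : ∀ s : S, ∃ (t : ℕ) (r : R), s * (f x) ^ t = f r)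
    (S₀ : Subalgebra k S)
    (hS₀ : ∀ s : S, s ∈ S₀ ↔ ∃ (t : ℕ) (r : R), r ∈ 𝒜 t ∧ s = f r * v ^ t) :
    IsNoetherianRing S₀ := by
  classical
  -- powers of `f x` and `v` are mutually inverse
  have huv : ∀ t : ℕ, (f x) ^ t * v ^ t = 1 := by
    intro t
    induction t with
    | zero => simp
    | succ n ih =>
      rw [pow_succ (f x), pow_succ' v, mul_assoc, ← mul_assoc (f x), hv, one_mul, ih]
  have hvu : ∀ t : ℕ, v ^ t * (f x) ^ t = 1 := by
    intro t
    induction t with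
    | zero => simp
    | succ n ih =>
      rw [pow_succ v, pow_succ' (f x), mul_assoc, ← mul_assoc v, hv', one_mul, ih]
  -- every element of `S` is of the form `f r * v ^ t`
  have hrep : ∀ s : S, ∃ (t : ℕ) (r : R), s = f r * v ^ t := by
    intro s
    obtain ⟨t, r, h⟩ := hfrac s
    refine ⟨t, r, ?_⟩
    have h2 : s * (f x) ^ t * v ^ t = f r * v ^ t := by rw [h]
    rwa [mul_assoc, huv, mul_one] at h2
  -- powers of `x` are homogeneous
  have hxpow : ∀ j : ℕ, x ^ j ∈ 𝒜 j := by
    intro j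
    simpa using SetLike.pow_mem_graded j hx1
  -- padding representations
  have pad : ∀ (r : R) (t j : ℕ), f (r * x ^ j) * v ^ (t + j) = f r * v ^ t := by
    intro r t j
    rw [map_mul, map_pow, add_comm t j, pow_add, mul_assoc, ← mul_assoc ((f x) ^ j), huv,
      one_mul]
  -- moving `v` to the left past `f r`
  have conjL : ∀ r : R, ∃ r' : R, f r * v = v * f r' := by
    intro r
    obtain ⟨r', hr⟩ := hxn r
    refine ⟨r', ?_⟩
    have h1 : f x * f r = f r' * f x := by rw [← map_mul, ← map_mul, hr]
    have h2 : v * (f x * f r) * v = v * (f r' * f x) * v := by rw [h1]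
    rw [← mul_assoc v, hv', one_mul, mul_assoc, mul_assoc, hv, mul_one] at h2
    exact h2
  have conjLpow : ∀ (t : ℕ) (r : R), ∃ r' : R, f r * v ^ t = v ^ t * f r' := by
    intro t
    induction t with
    | zero => exact fun r => ⟨r, by simp⟩
    | succ n ih =>
      intro r
      obtain ⟨r₁, h₁⟩ := ih r
      obtain ⟨r₂, h₂⟩ := conjL r₁
      refine ⟨r₂, ?_⟩
      rw [pow_succ, ← mul_assoc, h₁, mul_assoc, h₂, ← mul_assoc]
  -- moving `v` to the right past `f r`, preserving degrees
  have conjRmem : ∀ (d : ℕ) (r : R), r ∈ 𝒜 d →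
      ∃ r' : R, v * f r = f r' * v ∧ r' ∈ 𝒜 d := by
    intro d r hrd
    obtain ⟨r', hr⟩ := hxn' r
    have h1 : f r * f x = f x * f r' := by rw [← map_mul, ← map_mul, hr]
    have h2 : v * (f r * f x) * v = v * (f x * f r') * v := by rw [h1]
    rw [mul_assoc, mul_assoc, hv, mul_one, ← mul_assoc v, hv', one_mul] at h2
    refine ⟨r', h2, ?_⟩
    have hzero : ∀ i : ℕ, i ≠ d → (DirectSum.decompose 𝒜 r' i : R) = 0 := by
      intro i hi
      have e1 : (DirectSum.decompose 𝒜 (x * r') (1 + i) : R) =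
          x * (DirectSum.decompose 𝒜 r' i : R) :=
        DirectSum.coe_decompose_mul_add_of_left_mem 𝒜 hx1
      have e2 : (DirectSum.decompose 𝒜 (r * x) (i + 1) : R) =
          (DirectSum.decompose 𝒜 r i : R) * x :=
        DirectSum.coe_decompose_mul_add_of_right_mem 𝒜 hx1
      have e3 : (DirectSum.decompose 𝒜 r i : R) = 0 :=
        DirectSum.decompose_of_mem_ne 𝒜 hrd (fun h => hi h.symm)
      rw [e3, zero_mul, hr] at e2
      rw [add_comm 1 i] at e1
      have e4 : x * (DirectSum.decompose 𝒜 r' i : R) = x * 0 := by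
        rw [mul_zero, ← e1, e2]
      exact hxreg.left e4
    have hsum := DirectSum.sum_support_decompose 𝒜 r'
    rw [← hsum]
    apply Submodule.sum_mem
    intro i _
    by_cases h : i = d
    · subst h; exact SetLike.coe_mem _
    · rw [hzero i h]; exact Submodule.zero_mem _
  have conjRpow : ∀ (t d : ℕ) (r : R), r ∈ 𝒜 d →
      ∃ r' : R, v ^ t * f r = f r' * v ^ t ∧ r' ∈ 𝒜 d := by
    intro t
    induction t with
    | zero => exact fun d r h => ⟨r, by simp, h⟩
    | succ n ih =>
      intro d r h
      obtain ⟨r₁, h₁, hm₁⟩ := ih d r h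
      obtain ⟨r₂, h₂, hm₂⟩ := conjRmem d r₁ hm₁
      refine ⟨r₂, ?_, hm₂⟩
      rw [pow_succ', mul_assoc, h₁, ← mul_assoc, h₂, mul_assoc]
  -- additivity of homogeneous components
  have pdadd : ∀ (i : ℕ) (a b : R), (DirectSum.decompose 𝒜 (a + b) i : R) =
      (DirectSum.decompose 𝒜 a i : R) + (DirectSum.decompose 𝒜 b i : R) := by
    intro i a b
    simp [DirectSum.decompose_add]
  -- elements of `S₀` obtained by projection
  have hd0 : ∀ (t : ℕ) (r : R), f ((DirectSum.decompose 𝒜 r t : R)) * v ^ t ∈ S₀ := by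
    intro t r
    exact (hS₀ _).mpr ⟨t, (DirectSum.decompose 𝒜 r t : R), SetLike.coe_mem _, rfl⟩
  -- the "projection is well defined" lemma
  have W : ∀ (t t' : ℕ) (r r' : R), f r * v ^ t = f r' * v ^ t' →
      f ((DirectSum.decompose 𝒜 r t : R)) * v ^ t
        = f ((DirectSum.decompose 𝒜 r' t' : R)) * v ^ t' := by
    have Wle : ∀ (t j : ℕ) (r r' : R), f r * v ^ t = f r' * v ^ (t + j) →
        f ((DirectSum.decompose 𝒜 r t : R)) * v ^ t
          = f ((DirectSum.decompose 𝒜 r' (t + j) : R)) * v ^ (t + j) := by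
      intro t j r r' h
      have h5 := congrArg (fun s => s * (f x) ^ (t + j)) h
      change f r * v ^ t * (f x) ^ (t + j) = f r' * v ^ (t + j) * (f x) ^ (t + j) at h5
      rw [mul_assoc, mul_assoc, hvu, mul_one, pow_add, ← mul_assoc (v ^ t), hvu,
        one_mul] at h5
      have h2 : f (r * x ^ j) = f r' := by rw [map_mul, map_pow]; exact h5
      have h3 : r * x ^ j = r' := hinj h2
      subst h3
      have h4 : (DirectSum.decompose 𝒜 (r * x ^ j) (t + j) : R)
          = (DirectSum.decompose 𝒜 r t : R) * x ^ j :=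
        DirectSum.coe_decompose_mul_add_of_right_mem 𝒜 (hxpow j)
      rw [h4, pad]
    intro t t' r r' h
    rcases le_total t t' with hle | hle
    · obtain ⟨j, rfl⟩ := Nat.exists_eq_add_of_le hle
      exact Wle t j r r' h
    · obtain ⟨j, rfl⟩ := Nat.exists_eq_add_of_le hle
      exact (Wle t' j r' r h.symm).symm
  -- adding two representations
  have repaddle : ∀ (t j : ℕ) (r₁ r₂ : R), ∃ r₃ : R,
      f r₁ * v ^ t + f r₂ * v ^ (t + j) = f r₃ * v ^ (t + j) ∧
      f ((DirectSum.decompose 𝒜 r₃ (t + j) : R)) * v ^ (t + j)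
        = f ((DirectSum.decompose 𝒜 r₁ t : R)) * v ^ t
          + f ((DirectSum.decompose 𝒜 r₂ (t + j) : R)) * v ^ (t + j) := by
    intro t j r₁ r₂
    refine ⟨r₁ * x ^ j + r₂, ?_, ?_⟩
    · rw [map_add, add_mul, pad]
    · rw [pdadd, DirectSum.coe_decompose_mul_add_of_right_mem 𝒜 (hxpow j), map_add,
        add_mul, pad]
  -- the key lemma: every element of the left ideal of `S` generated by `I ⊆ S₀`
  -- has its degree-zero part in `I`
  have key : ∀ (I : Ideal S₀) (s : S),
      s ∈ Submodule.span S (Subtype.val '' (I : Set S₀)) →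
      ∃ (t : ℕ) (r : R), s = f r * v ^ t ∧
        ∃ b : S₀, b ∈ I ∧ (b : S) = f ((DirectSum.decompose 𝒜 r t : R)) * v ^ t := by
    intro I s hs
    have Qgen : ∀ (cc : S) (a₀ : S₀), a₀ ∈ I →
        ∃ (t : ℕ) (r : R), cc * (a₀ : S) = f r * v ^ t ∧
          ∃ b : S₀, b ∈ I ∧ (b : S) = f ((DirectSum.decompose 𝒜 r t : R)) * v ^ t := by
      intro cc a₀ ha₀
      obtain ⟨t, r, rfl⟩ := hrep cc
      obtain ⟨m, b, hb, hab⟩ := (hS₀ (a₀ : S)).mp a₀.2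
      obtain ⟨b', hb'eq, hb'mem⟩ := conjRpow t m b hb
      have mini : ∀ w : S, w * v ^ t * (f b * v ^ m) = w * f b' * v ^ (t + m) := by
        intro w
        rw [pow_add, mul_assoc w, ← mul_assoc (v ^ t), hb'eq]
        simp only [mul_assoc]
      have hdec : (DirectSum.decompose 𝒜 (r * b') (t + m) : R)
          = (DirectSum.decompose 𝒜 r t : R) * b' :=
        DirectSum.coe_decompose_mul_add_of_right_mem 𝒜 hb'mem
      refine ⟨t + m, r * b', ?_, ⟨f ((DirectSum.decompose 𝒜 r t : R)) * v ^ t, hd0 t r⟩ * a₀,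
        Ideal.mul_mem_left I _ ha₀, ?_⟩
      · rw [hab, mini (f r), map_mul, mul_assoc]
      · show (f ((DirectSum.decompose 𝒜 r t : R)) * v ^ t) * (a₀ : S)
          = f ((DirectSum.decompose 𝒜 (r * b') (t + m) : R)) * v ^ (t + m)
        rw [hab, mini (f ((DirectSum.decompose 𝒜 r t : R))), hdec, map_mul]
    rw [Submodule.mem_span_set] at hs
    obtain ⟨c, hsupp, rfl⟩ := hs
    have hsum : (c.sum fun mi r => r • mi) = ∑ a ∈ c.support, c a • a := rfl
    rw [hsum]
    refine Finset.sum_induction _ (fun z => ∃ (t : ℕ) (r : R), z = f r * v ^ t ∧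
        ∃ b : S₀, b ∈ I ∧ (b : S) = f ((DirectSum.decompose 𝒜 r t : R)) * v ^ t)
      ?_ ?_ ?_
    · -- addition
      rintro s₁ s₂ ⟨t₁, r₁, e₁, b₁, hb₁, eb₁⟩ ⟨t₂, r₂, e₂, b₂, hb₂, eb₂⟩
      rcases le_total t₁ t₂ with hle | hle
      · obtain ⟨j, rfl⟩ := Nat.exists_eq_add_of_le hle
        obtain ⟨r₃, he, hp⟩ := repaddle t₁ j r₁ r₂
        refine ⟨t₁ + j, r₃, ?_, b₁ + b₂, I.add_mem hb₁ hb₂, ?_⟩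
        · rw [e₁, e₂, he]
        · rw [hp, ← eb₁, ← eb₂]; norm_cast
      · obtain ⟨j, rfl⟩ := Nat.exists_eq_add_of_le hle
        obtain ⟨r₃, he, hp⟩ := repaddle t₂ j r₂ r₁
        refine ⟨t₂ + j, r₃, ?_, b₂ + b₁, I.add_mem hb₂ hb₁, ?_⟩
        · rw [add_comm s₁ s₂, e₁, e₂, he]
        · rw [hp, ← eb₁, ← eb₂]; norm_cast
    · -- zero
      refine ⟨0, 0, by simp, 0, I.zero_mem, by simp⟩
    · -- generators
      intro a ha
      obtain ⟨a₀, ha₀I, rfl⟩ := hsupp ha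
      rw [smul_eq_mul]
      exact Qgen (c (a₀ : S)) a₀ ha₀I
  -- recovering `I` from the ideal it generates in `S`
  have hGrecover : ∀ (I : Ideal S₀) (a : S₀),
      (a : S) ∈ Submodule.span S (Subtype.val '' (I : Set S₀)) → a ∈ I := by
    intro I a ha
    obtain ⟨t, r, e, b, hbI, eb⟩ := key I _ ha
    obtain ⟨m, r₀, hr₀, e₀⟩ := (hS₀ (a : S)).mp a.2
    have w := W m t r₀ r (e₀.symm.trans e)
    rw [DirectSum.decompose_of_mem_same 𝒜 hr₀] at w
    have hab : (a : S) = (b : S) := by rw [e₀, w, ← eb]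
    have hab' : a = b := Subtype.ext hab
    rw [hab']
    exact hbI
  -- recovering ideals of `S` from their contraction to `R`
  have hFrecover : ∀ (J J' : Ideal S),
      Ideal.comap f.toRingHom J ≤ Ideal.comap f.toRingHom J' → J ≤ J' := by
    intro J J' h s hs
    obtain ⟨t, r, rfl⟩ := hrep s
    obtain ⟨r₁, h₁⟩ := conjLpow t r
    have hfr₁ : f r₁ ∈ J := by
      have h2 : (f x) ^ t * (f r * v ^ t) ∈ J := J.mul_mem_left _ hs
      rwa [h₁, ← mul_assoc, huv, one_mul] at h2
    have h3 : r₁ ∈ Ideal.comap f.toRingHom J := Ideal.mem_comap.mpr hfr₁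
    have h4 : f r₁ ∈ J' := Ideal.mem_comap.mp (h h3)
    rw [h₁]
    exact J'.mul_mem_left _ h4
  -- assembling: a strictly monotone map from ideals of `S₀` to ideals of `R`
  rw [isNoetherianRing_iff, isNoetherian_iff]
  have wfR : WellFounded ((· > ·) : Ideal R → Ideal R → Prop) := by
    rw [isNoetherianRing_iff, isNoetherian_iff] at hnoeth
    exact hnoeth
  let H : Ideal S₀ → Ideal R := fun I =>
    Ideal.comap f.toRingHom (Submodule.span S (Subtype.val '' (I : Set S₀)))
  have hmono : ∀ {I I' : Ideal S₀}, I < I' → H I < H I' := by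
    intro I I' hlt
    have hle : H I ≤ H I' :=
      Ideal.comap_mono (Submodule.span_mono (Set.image_mono fun z hz => hlt.le hz))
    refine lt_of_le_of_ne hle ?_
    intro heq
    have hsp : Submodule.span S (Subtype.val '' (I' : Set S₀)) ≤
        Submodule.span S (Subtype.val '' (I : Set S₀)) :=
      hFrecover _ _ (le_of_eq heq.symm)
    have hI'le : I' ≤ I := by
      intro a ha
      exact hGrecover I a (hsp (Submodule.subset_span ⟨a, ha, rfl⟩))
    exact hlt.ne (le_antisymm hlt.le hI'le)
  exact Subrelation.wf (fun {J J'} h => hmono h) (InvImage.wf H wfR)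
end

section
/- Let R be a noetherian domain with division ring of fractions Q, and let a, b be nonzero normal elements of R with ab = λba for a central unit λ, such that b is left regular modulo aR. Then R[a^{-1}] ∩ R[b^{-1}] = R inside Q. -/
section auxlemmas

variable {R Q : Type*} [Ring R] [DivisionRing Q]

/-- Flip a relation `x * a = a * y` across `(g a)⁻¹`. -/
lemma aux_flip (g : R →+* Q) (a : R) (hga : g a ≠ 0) {x y : R} (h : x * a = a * y) :
    (g a)⁻¹ * g x = g y * (g a)⁻¹ := by
  have h1 : g x * g a = g a * g y := by rw [← map_mul, ← map_mul, h]
  have h2 : g x = g a * g y * (g a)⁻¹ := by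
    rw [eq_mul_inv_iff_mul_eq₀ hga]; exact h1
  rw [h2, ← mul_assoc, ← mul_assoc, inv_mul_cancel₀ hga, one_mul]

/-- Move a ring element leftwards past powers of `(g a)⁻¹`, for `a` normal. -/
lemma aux_move (g : R →+* Q) (a : R) (hga : g a ≠ 0)
    (hn' : ∀ r : R, ∃ r' : R, r * a = a * r') :
    ∀ (n : ℕ) (r : R), ∃ r' : R, ((g a)⁻¹) ^ n * g r = g r' * ((g a)⁻¹) ^ n := by
  intro n
  induction n with
  | zero => intro r; exact ⟨r, by simp⟩
  | succ n ih =>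
    intro r
    obtain ⟨r₁, hr₁⟩ := hn' r
    obtain ⟨r₂, hr₂⟩ := ih r₁
    refine ⟨r₂, ?_⟩
    calc ((g a)⁻¹) ^ (n + 1) * g r = ((g a)⁻¹) ^ n * ((g a)⁻¹ * g r) := by
          rw [pow_succ, mul_assoc]
      _ = ((g a)⁻¹) ^ n * (g r₁ * (g a)⁻¹) := by rw [aux_flip g a hga hr₁]
      _ = (((g a)⁻¹) ^ n * g r₁) * (g a)⁻¹ := by rw [mul_assoc]
      _ = g r₂ * ((g a)⁻¹) ^ n * (g a)⁻¹ := by rw [hr₂]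
      _ = g r₂ * ((g a)⁻¹) ^ (n + 1) := by rw [pow_succ, mul_assoc]

/-- Common denominator lemma. -/
lemma aux_den (g : R →+* Q) (a : R) (hga : g a ≠ 0) {n m : ℕ} (h : n ≤ m) (r : R) :
    g r * ((g a)⁻¹) ^ n = g (r * a ^ (m - n)) * ((g a)⁻¹) ^ m := by
  have key : ((g a)⁻¹) ^ n = (g a) ^ (m - n) * ((g a)⁻¹) ^ m := by
    have h1 : ((g a)⁻¹) ^ m = ((g a)⁻¹) ^ (m - n) * ((g a)⁻¹) ^ n := by
      rw [← pow_add, Nat.sub_add_cancel h]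
    have hc : (g a) ^ (m - n) * ((g a)⁻¹) ^ (m - n) = 1 := by
      rw [inv_pow, mul_inv_cancel₀ (pow_ne_zero _ hga)]
    rw [h1, ← mul_assoc, hc, one_mul]
  rw [map_mul, map_pow, mul_assoc, ← key]

/-- Every element of `R[a⁻¹]` has the form `g r * ((g a)⁻¹)^n`. -/
lemma aux_rep (g : R →+* Q) (a : R) (hga : g a ≠ 0)
    (hn' : ∀ r : R, ∃ r' : R, r * a = a * r') :
    ∀ x ∈ Subring.closure (Set.range g ∪ {(g a)⁻¹}),
      ∃ (r : R) (n : ℕ), x = g r * ((g a)⁻¹) ^ n := by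
  intro x hx
  induction hx using Subring.closure_induction with
  | mem x hx =>
    rcases hx with ⟨r, rfl⟩ | hx
    · exact ⟨r, 0, by simp⟩
    · refine ⟨1, 1, ?_⟩
      simp only [Set.mem_singleton_iff] at hx
      simp [hx]
  | zero => exact ⟨0, 0, by simp⟩
  | one => exact ⟨1, 0, by simp⟩
  | add x y hx hy ihx ihy =>
    obtain ⟨r, n, rfl⟩ := ihx
    obtain ⟨s, m, rfl⟩ := ihy
    rcases le_total n m with h | h
    · refine ⟨r * a ^ (m - n) + s, m, ?_⟩
      rw [aux_den g a hga h r, map_add, add_mul]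
    · refine ⟨r + s * a ^ (n - m), n, ?_⟩
      rw [aux_den g a hga h s, map_add, add_mul]
  | neg x hx ihx =>
    obtain ⟨r, n, rfl⟩ := ihx
    exact ⟨-r, n, by simp⟩
  | mul x y hx hy ihx ihy =>
    obtain ⟨r, n, rfl⟩ := ihx
    obtain ⟨s, m, rfl⟩ := ihy
    obtain ⟨s', hs'⟩ := aux_move g a hga hn' n s
    refine ⟨r * s', n + m, ?_⟩
    calc g r * ((g a)⁻¹) ^ n * (g s * ((g a)⁻¹) ^ m)
        = g r * (((g a)⁻¹) ^ n * g s) * ((g a)⁻¹) ^ m := by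
          rw [mul_assoc, mul_assoc, mul_assoc]
      _ = g r * (g s' * ((g a)⁻¹) ^ n) * ((g a)⁻¹) ^ m := by rw [hs']
      _ = g (r * s') * (((g a)⁻¹) ^ n * ((g a)⁻¹) ^ m) := by
          simp [map_mul, mul_assoc]
      _ = g (r * s') * ((g a)⁻¹) ^ (n + m) := by rw [pow_add]

end auxlemmas

/-- If `R` is a noetherian domain with division ring of fractions `Q`, and `a, b` are
nonzero normal elements with `ab = λba` for a central unit `λ`, such that `b` is left
regular modulo `aR`, then `R[a⁻¹] ∩ R[b⁻¹] = R` inside `Q`. -/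
theorem stmt9 {R Q : Type*} [Ring R] [IsNoetherianRing R] [IsDomain R] [DivisionRing Q]
    (g : R →+* Q) (hinj : Function.Injective g)
    (hfrac : ∀ x : Q, ∃ r s : R, s ≠ 0 ∧ x = g r * (g s)⁻¹)
    (a b : R) (ha : a ≠ 0) (hb : b ≠ 0)
    (han : ∀ r : R, ∃ r' : R, a * r = r' * a) (han' : ∀ r : R, ∃ r' : R, r * a = a * r')
    (hbn : ∀ r : R, ∃ r' : R, b * r = r' * b) (hbn' : ∀ r : R, ∃ r' : R, r * b = b * r')
    (lam : Rˣ) (hlamc : ∀ r : R, (lam : R) * r = r * (lam : R))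
    (hab : a * b = (lam : R) * (b * a))
    (hregmod : ∀ r : R, (∃ s : R, r * b = a * s) → ∃ s : R, r = a * s)
    (A B : Subring Q)
    (hA : A = Subring.closure (Set.range g ∪ {(g a)⁻¹}))
    (hB : B = Subring.closure (Set.range g ∪ {(g b)⁻¹})) :
    A ⊓ B = g.range := by
  have hga : g a ≠ 0 := fun h => ha (hinj (by simpa using h))
  have hgb : g b ≠ 0 := fun h => hb (hinj (by simpa using h))
  -- centrality of λ⁻¹
  have hlaminv : ∀ r : R, ((lam⁻¹ : Rˣ) : R) * r = r * ((lam⁻¹ : Rˣ) : R) := by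
    intro r
    calc ((lam⁻¹ : Rˣ) : R) * r
        = ((lam⁻¹ : Rˣ) : R) * (r * (lam : R) * ((lam⁻¹ : Rˣ) : R)) := by
          rw [Units.mul_inv_cancel_right]
      _ = ((lam⁻¹ : Rˣ) : R) * ((lam : R) * (r * ((lam⁻¹ : Rˣ) : R))) := by
          rw [← hlamc, mul_assoc]
      _ = r * ((lam⁻¹ : Rˣ) : R) := by rw [Units.inv_mul_cancel_left]
  -- b * a = a * (λ⁻¹ * b)
  have hba : b * a = a * (((lam⁻¹ : Rˣ) : R) * b) := by
    have h1 : ((lam⁻¹ : Rˣ) : R) * (a * b) = b * a := by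
      rw [hab, Units.inv_mul_cancel_left]
    calc b * a = ((lam⁻¹ : Rˣ) : R) * (a * b) := h1.symm
      _ = (((lam⁻¹ : Rˣ) : R) * a) * b := by rw [mul_assoc]
      _ = (a * ((lam⁻¹ : Rˣ) : R)) * b := by rw [hlaminv]
      _ = a * (((lam⁻¹ : Rˣ) : R) * b) := by rw [mul_assoc]
  -- moving one copy of b past (g a)⁻¹ ^ n, keeping track of a central unit
  have keyn : ∀ (n : ℕ) (μ : Rˣ), (∀ r : R, (μ : R) * r = r * (μ : R)) →
      ∃ ν : Rˣ, (∀ r : R, (ν : R) * r = r * (ν : R)) ∧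
        ((g a)⁻¹) ^ n * g ((μ : R) * b) = g ((ν : R) * b) * ((g a)⁻¹) ^ n := by
    intro n
    induction n with
    | zero => intro μ hμ; exact ⟨μ, hμ, by simp⟩
    | succ n ih =>
      intro μ hμ
      obtain ⟨ν, hνc, hν⟩ := ih μ hμ
      -- (ν * b) * a = a * ((λ⁻¹ * ν) * b)
      have hstep : ((ν : R) * b) * a = a * (((lam⁻¹ * ν : Rˣ) : R) * b) := by
        calc ((ν : R) * b) * a = (ν : R) * (b * a) := by rw [mul_assoc]
          _ = (ν : R) * (a * (((lam⁻¹ : Rˣ) : R) * b)) := by rw [hba]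
          _ = ((ν : R) * a) * (((lam⁻¹ : Rˣ) : R) * b) := by rw [mul_assoc]
          _ = (a * (ν : R)) * (((lam⁻¹ : Rˣ) : R) * b) := by rw [hνc]
          _ = a * ((ν : R) * (((lam⁻¹ : Rˣ) : R) * b)) := by rw [mul_assoc]
          _ = a * (((ν : R) * ((lam⁻¹ : Rˣ) : R)) * b) := by rw [mul_assoc]
          _ = a * ((((lam⁻¹ : Rˣ) : R) * (ν : R)) * b) := by rw [hνc]
          _ = a * (((lam⁻¹ * ν : Rˣ) : R) * b) := by rw [Units.val_mul]
      refine ⟨lam⁻¹ * ν, ?_, ?_⟩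
      · intro r
        rw [Units.val_mul, mul_assoc, hνc, ← mul_assoc, hlaminv, mul_assoc]
      · calc ((g a)⁻¹) ^ (n + 1) * g ((μ : R) * b)
            = ((g a)⁻¹) * (((g a)⁻¹) ^ n * g ((μ : R) * b)) := by
              rw [pow_succ', mul_assoc]
          _ = ((g a)⁻¹) * (g ((ν : R) * b) * ((g a)⁻¹) ^ n) := by rw [hν]
          _ = ((g a)⁻¹ * g ((ν : R) * b)) * ((g a)⁻¹) ^ n := by rw [mul_assoc]
          _ = (g (((lam⁻¹ * ν : Rˣ) : R) * b) * (g a)⁻¹) * ((g a)⁻¹) ^ n := by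
              rw [aux_flip g a hga hstep]
          _ = g (((lam⁻¹ * ν : Rˣ) : R) * b) * ((g a)⁻¹) ^ (n + 1) := by
              rw [pow_succ', mul_assoc]
  -- moving b^m past (g a)⁻¹ ^ n
  have keym : ∀ (m n : ℕ), ∃ μ : Rˣ, (∀ r : R, (μ : R) * r = r * (μ : R)) ∧
      ((g a)⁻¹) ^ n * (g b) ^ m = g ((μ : R) * b ^ m) * ((g a)⁻¹) ^ n := by
    intro m
    induction m with
    | zero => intro n; exact ⟨1, by simp, by simp⟩
    | succ m ih =>
      intro n
      obtain ⟨μ, hμc, hμ⟩ := ih n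
      obtain ⟨ν, hνc, hν⟩ := keyn n 1 (by simp)
      have hν' : ((g a)⁻¹) ^ n * g b = g ((ν : R) * b) * ((g a)⁻¹) ^ n := by
        simpa using hν
      refine ⟨ν * μ, ?_, ?_⟩
      · intro r
        rw [Units.val_mul, mul_assoc, hμc, ← mul_assoc, hνc, mul_assoc]
      · have hcomm : ((ν : R) * b) * ((μ : R) * b ^ m) = ((ν * μ : Rˣ) : R) * b ^ (m + 1) := by
          rw [Units.val_mul, pow_succ', mul_assoc (ν : R) b, ← mul_assoc b (μ : R),
            ← hμc b, mul_assoc (μ : R) b, ← mul_assoc]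
        calc ((g a)⁻¹) ^ n * (g b) ^ (m + 1)
            = (((g a)⁻¹) ^ n * g b) * (g b) ^ m := by rw [pow_succ', ← mul_assoc]
          _ = g ((ν : R) * b) * (((g a)⁻¹) ^ n * (g b) ^ m) := by
              rw [hν', mul_assoc]
          _ = g ((ν : R) * b) * (g ((μ : R) * b ^ m) * ((g a)⁻¹) ^ n) := by rw [hμ]
          _ = (g ((ν : R) * b) * g ((μ : R) * b ^ m)) * ((g a)⁻¹) ^ n := by
              rw [mul_assoc]
          _ = g (((ν * μ : Rˣ) : R) * b ^ (m + 1)) * ((g a)⁻¹) ^ n := by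
              rw [← map_mul, hcomm]
  -- s * a^(n+1) ∈ aR
  have hsa : ∀ (s : R) (n : ℕ), ∃ w : R, s * a ^ (n + 1) = a * w := by
    intro s n
    obtain ⟨w, hw⟩ := han' (s * a ^ n)
    exact ⟨w, by rw [pow_succ, ← mul_assoc, hw]⟩
  -- regularity for powers of b
  have hreg_pow : ∀ (m : ℕ) (t : R), (∃ w : R, t * b ^ m = a * w) → ∃ w : R, t = a * w := by
    intro m
    induction m with
    | zero => intro t ⟨w, hw⟩; exact ⟨w, by simpa using hw⟩
    | succ m ih =>
      intro t ⟨w, hw⟩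
      have h1 : (t * b ^ m) * b = a * w := by rw [mul_assoc, ← pow_succ, hw]
      obtain ⟨w', hw'⟩ := hregmod (t * b ^ m) ⟨w, h1⟩
      exact ih t ⟨w', hw'⟩
  -- the descent lemma
  have descent : ∀ (n : ℕ) (r s : R) (m : ℕ),
      g r * ((g a)⁻¹) ^ n = g s * ((g b)⁻¹) ^ m →
      ∃ t : R, g r * ((g a)⁻¹) ^ n = g t := by
    intro n
    induction n with
    | zero => intro r s m _; exact ⟨r, by simp⟩
    | succ n ih =>
      intro r s m heq
      obtain ⟨μ, hμc, hμ⟩ := keym m (n + 1)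
      have h1 : g r * (((g a)⁻¹) ^ (n + 1) * (g b) ^ m) = g s := by
        have hcancel : ((g b)⁻¹) ^ m * (g b) ^ m = 1 := by
          rw [inv_pow, inv_mul_cancel₀ (pow_ne_zero _ hgb)]
        calc g r * (((g a)⁻¹) ^ (n + 1) * (g b) ^ m)
            = (g r * ((g a)⁻¹) ^ (n + 1)) * (g b) ^ m := by rw [mul_assoc]
          _ = (g s * ((g b)⁻¹) ^ m) * (g b) ^ m := by rw [heq]
          _ = g s := by rw [mul_assoc, hcancel, mul_one]
      have h2 : g (r * ((μ : R) * b ^ m)) = g (s * a ^ (n + 1)) := by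
        have h3 : g (r * ((μ : R) * b ^ m)) * ((g a)⁻¹) ^ (n + 1) = g s := by
          rw [map_mul, mul_assoc, ← hμ, h1]
        have h4 : g (r * ((μ : R) * b ^ m)) = g s * (g a) ^ (n + 1) := by
          rw [← h3, mul_assoc, inv_pow, inv_mul_cancel₀ (pow_ne_zero _ hga), mul_one]
        rw [h4, map_mul, map_pow]
      have h5 : (r * (μ : R)) * b ^ m = s * a ^ (n + 1) := by
        rw [mul_assoc]; exact hinj h2
      obtain ⟨w, hw⟩ := hsa s n
      obtain ⟨w', hw'⟩ := hreg_pow m (r * (μ : R)) ⟨w, by rw [h5, hw]⟩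
      have h6 : r = a * (w' * ((μ⁻¹ : Rˣ) : R)) := by
        have h7 : r * (μ : R) * ((μ⁻¹ : Rˣ) : R) = a * w' * ((μ⁻¹ : Rˣ) : R) := by
          rw [hw']
        rw [Units.mul_inv_cancel_right] at h7
        rw [h7, mul_assoc]
      obtain ⟨v, hv⟩ := han (w' * ((μ⁻¹ : Rˣ) : R))
      have h7 : r = v * a := by rw [h6, hv]
      have h8 : g r * ((g a)⁻¹) ^ (n + 1) = g v * ((g a)⁻¹) ^ n := by
        rw [h7, map_mul, mul_assoc]
        congr 1
        rw [pow_succ', ← mul_assoc, mul_inv_cancel₀ hga, one_mul]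
      obtain ⟨t, ht⟩ := ih v s m (by rw [← h8, heq])
      exact ⟨t, by rw [h8, ht]⟩
  -- conclusion
  apply le_antisymm
  · intro x hx
    rw [Subring.mem_inf] at hx
    obtain ⟨hxA, hxB⟩ := hx
    rw [hA] at hxA
    rw [hB] at hxB
    obtain ⟨r, n, hr⟩ := aux_rep g a hga han' x hxA
    obtain ⟨s, m, hs⟩ := aux_rep g b hgb hbn' x hxB
    obtain ⟨t, ht⟩ := descent n r s m (by rw [← hr, ← hs])
    exact ⟨t, by rw [← ht, ← hr]⟩
  · rintro x ⟨r, rfl⟩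
    rw [Subring.mem_inf]
    constructor
    · rw [hA]; exact Subring.subset_closure (Or.inl ⟨r, rfl⟩)
    · rw [hB]; exact Subring.subset_closure (Or.inl ⟨r, rfl⟩)
end

section
/- Suppose A is a ring with a finite sequence of elements u_1,...,u_N such that u_1 is normal in A, u_l is normal modulo the ideal generated by u_1,...,u_{l-1} for each l > 1, and A/⟨u_1,...,u_N⟩ is noetherian. If in addition the associated graded structure satisfies the hypotheses of the ATV lemma (each quotient A/⟨u_1,...,u_l⟩ is connected graded and each u_{l+1} is homogeneous normal in it), then A is noetherian. -/
open Submodule DirectSum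

section ATV

variable {k A : Type*} [Field k] [Ring A] [Algebra k A]
variable (𝒜 : ℕ → Submodule k A) [GradedAlgebra 𝒜]

/-- degree-`m` component of `a`. -/
noncomputable def pj (m : ℕ) (a : A) : A := (DirectSum.decompose 𝒜 a m : A)

lemma pj_add (m : ℕ) (a b : A) : pj 𝒜 m (a + b) = pj 𝒜 m a + pj 𝒜 m b := by
  simp [pj]

lemma pj_zero (m : ℕ) : pj 𝒜 m 0 = 0 := by simp [pj]

lemma pj_sub (m : ℕ) (a b : A) : pj 𝒜 m (a - b) = pj 𝒜 m a - pj 𝒜 m b := by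
  simp [pj]

lemma pj_mem (m : ℕ) (a : A) : pj 𝒜 m a ∈ 𝒜 m := SetLike.coe_mem _

lemma pj_of_mem_same {m : ℕ} {a : A} (h : a ∈ 𝒜 m) : pj 𝒜 m a = a :=
  DirectSum.decompose_of_mem_same 𝒜 h

lemma pj_of_mem_ne {i m : ℕ} {a : A} (h : a ∈ 𝒜 i) (hne : i ≠ m) : pj 𝒜 m a = 0 :=
  DirectSum.decompose_of_mem_ne 𝒜 h hne

open Classical in
lemma pj_sum_support (a : A) :
    ∑ m ∈ (DirectSum.decompose 𝒜 a).support, pj 𝒜 m a = a :=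
  DirectSum.sum_support_decompose 𝒜 a

lemma pj_exists_bound (a : A) : ∃ M : ℕ, ∀ j, M ≤ j → pj 𝒜 j a = 0 := by
  classical
  refine ⟨((DirectSum.decompose 𝒜 a).support.sup id) + 1, fun j hj => ?_⟩
  have : j ∉ (DirectSum.decompose 𝒜 a).support := by
    intro hmem
    have := Finset.le_sup (f := id) hmem
    simp only [id] at this
    omega
  simp only [pj]
  rw [DFinsupp.notMem_support_iff.mp this]
  rfl

lemma eq_zero_of_pj_eq_zero {a : A} (h : ∀ j, pj 𝒜 j a = 0) : a = 0 := by
  classical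
  have hs := DirectSum.sum_support_decompose 𝒜 a
  calc a = ∑ m ∈ (DirectSum.decompose 𝒜 a).support, pj 𝒜 m a := hs.symm
    _ = 0 := Finset.sum_eq_zero fun m _ => h m

/-- left multiplication by a homogeneous element shifts components. -/
lemma pj_mul_left {y : A} {e : ℕ} (hy : y ∈ 𝒜 e) (m : ℕ) (a : A) :
    pj 𝒜 (e + m) (y * a) = y * pj 𝒜 m a := by
  induction a using DirectSum.Decomposition.inductionOn 𝒜 with
  | zero => simp [pj]
  | @homogeneous j b =>
      by_cases hjm : m = j
      · subst hjm
        rw [pj_of_mem_same 𝒜 b.2, pj_of_mem_same 𝒜 (SetLike.mul_mem_graded hy b.2)]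
      · rw [pj_of_mem_ne 𝒜 b.2 (Ne.symm hjm),
          pj_of_mem_ne 𝒜 (SetLike.mul_mem_graded hy b.2) (by omega), mul_zero]
  | add b c hb hc => rw [mul_add, pj_add, pj_add, hb, hc, mul_add]

lemma pj_mul_left_low {y : A} {e : ℕ} (hy : y ∈ 𝒜 e) {m : ℕ} (hm : m < e) (a : A) :
    pj 𝒜 m (y * a) = 0 := by
  induction a using DirectSum.Decomposition.inductionOn 𝒜 with
  | zero => simp [pj]
  | @homogeneous j b =>
      exact pj_of_mem_ne 𝒜 (SetLike.mul_mem_graded hy b.2) (by omega)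
  | add b c hb hc => rw [mul_add, pj_add, hb, hc, add_zero]

lemma pj_mul_right {y : A} {e : ℕ} (hy : y ∈ 𝒜 e) (m : ℕ) (a : A) :
    pj 𝒜 (m + e) (a * y) = pj 𝒜 m a * y := by
  induction a using DirectSum.Decomposition.inductionOn 𝒜 with
  | zero => simp [pj]
  | @homogeneous j b =>
      by_cases hjm : m = j
      · subst hjm
        rw [pj_of_mem_same 𝒜 b.2, pj_of_mem_same 𝒜 (SetLike.mul_mem_graded b.2 hy)]
      · rw [pj_of_mem_ne 𝒜 b.2 (Ne.symm hjm),
          pj_of_mem_ne 𝒜 (SetLike.mul_mem_graded b.2 hy) (by omega), zero_mul]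
  | add b c hb hc => rw [add_mul, pj_add, pj_add, hb, hc, add_mul]

lemma pj_mul_right_low {y : A} {e : ℕ} (hy : y ∈ 𝒜 e) {m : ℕ} (hm : m < e) (a : A) :
    pj 𝒜 m (a * y) = 0 := by
  induction a using DirectSum.Decomposition.inductionOn 𝒜 with
  | zero => simp [pj]
  | @homogeneous j b =>
      exact pj_of_mem_ne 𝒜 (SetLike.mul_mem_graded b.2 hy) (by omega)
  | add b c hb hc => rw [add_mul, pj_add, hb, hc, add_zero]


/-- a left ideal is graded if it is closed under taking homogeneous components -/
def IsGr (J : Submodule A A) : Prop := ∀ a ∈ J, ∀ m, pj 𝒜 m a ∈ J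

open Classical in
/-- the finite set of homogeneous components of `a` -/
noncomputable def comps (a : A) : Finset A :=
  (DirectSum.decompose 𝒜 a).support.image (fun m => pj 𝒜 m a)

lemma comps_spec {a b : A} (hb : b ∈ comps 𝒜 a) : ∃ m, b = pj 𝒜 m a := by
  classical
  simp only [comps, Finset.mem_image] at hb
  obtain ⟨m, -, rfl⟩ := hb
  exact ⟨m, rfl⟩

lemma mem_span_comps (a : A) : a ∈ span A ((comps 𝒜 a : Finset A) : Set A) := by
  classical
  have h : ∑ m ∈ (DirectSum.decompose 𝒜 a).support, pj 𝒜 m a = a :=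
    DirectSum.sum_support_decompose 𝒜 a
  have hs : ∑ m ∈ (DirectSum.decompose 𝒜 a).support, pj 𝒜 m a
      ∈ span A ((comps 𝒜 a : Finset A) : Set A) := by
    refine sum_mem fun m hm => subset_span ?_
    simp only [comps, Finset.coe_image, Set.mem_image]
    exact ⟨m, by simpa using hm, rfl⟩
  rwa [h] at hs


lemma isGr_sup {P Q : Submodule A A} (hP : IsGr 𝒜 P) (hQ : IsGr 𝒜 Q) : IsGr 𝒜 (P ⊔ Q) := by
  intro a ha m
  rcases mem_sup.mp ha with ⟨p, hp, q, hq, rfl⟩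
  rw [pj_add]
  exact mem_sup.mpr ⟨_, hP p hp m, _, hQ q hq m, rfl⟩

lemma pj_sum {ι : Type*} (s : Finset ι) (f : ι → A) (m : ℕ) :
    pj 𝒜 m (∑ i ∈ s, f i) = ∑ i ∈ s, pj 𝒜 m (f i) := by
  classical
  induction s using Finset.induction with
  | empty => simp [pj_zero]
  | insert _ _ h ih => rw [Finset.sum_insert h, Finset.sum_insert h, pj_add, ih]

/-- the span of a set of homogeneous elements is graded -/
lemma isGr_span {S : Set A} (hS : ∀ s ∈ S, ∃ e, s ∈ 𝒜 e) : IsGr 𝒜 (span A S) := by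
  intro a ha m
  rcases mem_span_set.mp ha with ⟨c, hc, rfl⟩
  rw [Finsupp.sum, pj_sum]
  refine sum_mem fun g hg => ?_
  obtain ⟨e, he⟩ := hS g (hc hg)
  rw [smul_eq_mul]
  by_cases hme : e ≤ m
  · obtain ⟨m', rfl⟩ : ∃ m', m = m' + e := ⟨m - e, by omega⟩
    rw [pj_mul_right 𝒜 he]
    exact smul_mem _ _ (subset_span (hc hg))
  · rw [pj_mul_right_low 𝒜 he (by omega)]
    exact zero_mem _

/-- extraction of finite generation mod `I` from noetherianity of the quotient by a
two-sided ideal whose underlying set is `I`. -/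
lemma fg_mod_of_quot_noetherian {c : TwoSidedIdeal A}
    (hQ : IsNoetherianRing c.ringCon.Quotient)
    {I : Submodule A A} (hI : ∀ a : A, a ∈ c ↔ a ∈ I)
    (J : Submodule A A) (hJ : I ≤ J) :
    ∃ S : Finset A, (S : Set A) ⊆ (J : Set A) ∧ J ≤ span A (S : Set A) ⊔ I := by
  classical
  set Q := c.ringCon.Quotient with hQdef
  let π : A →+* Q := RingCon.mk' c.ringCon
  have hker : ∀ z : A, π z = 0 → z ∈ I := by
    intro z hz
    have : c.ringCon z 0 := by
      have : (z : Q) = ((0 : A) : Q) := hz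
      exact c.ringCon.eq.mp this
    exact (hI z).mp ((TwoSidedIdeal.mem_iff c z).mpr this)
  have hsurj : ∀ q : Q, ∃ a : A, π a = q := fun q => Quotient.mk''_surjective q
  -- the image ideal
  set K : Ideal Q := Ideal.span (π '' (J : Set A)) with hK
  have hKfg : K.FG := IsNoetherian.noetherian K
  obtain ⟨T, hT⟩ := hKfg
  have hlift : ∀ t ∈ K, ∃ a ∈ J, π a = t := by
    intro t ht
    induction ht using Submodule.span_induction with
    | mem t ht => obtain ⟨a, ha, rfl⟩ := ht; exact ⟨a, ha, rfl⟩
    | zero => exact ⟨0, zero_mem _, map_zero π⟩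
    | add x y _ _ hx hy =>
        obtain ⟨a, ha, rfl⟩ := hx; obtain ⟨b, hb, rfl⟩ := hy
        exact ⟨a + b, add_mem ha hb, map_add π a b⟩
    | smul q x _ hx =>
        obtain ⟨a, ha, rfl⟩ := hx
        obtain ⟨cq, rfl⟩ := hsurj q
        exact ⟨cq * a, J.smul_mem cq ha, map_mul π cq a⟩
  let g : Q → A := fun t => if h : ∃ a ∈ J, π a = t then h.choose else 0
  have hg : ∀ t ∈ K, g t ∈ J ∧ π (g t) = t := by
    intro t ht
    have h := hlift t ht
    simp only [g, dif_pos h]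
    exact ⟨h.choose_spec.1, h.choose_spec.2⟩
  refine ⟨T.image g, ?_, ?_⟩
  · intro a ha
    simp only [Finset.coe_image, Set.mem_image] at ha
    obtain ⟨t, ht, rfl⟩ := ha
    exact (hg t (hT ▸ subset_span ht)).1
  · intro a haJ
    have haK : π a ∈ K := subset_span ⟨a, haJ, rfl⟩
    rw [← hT] at haK
    obtain ⟨f, -, hf⟩ := mem_span_finset.mp haK
    let σ : Q → A := fun q => (hsurj q).choose
    have hσ : ∀ q, π (σ q) = q := fun q => (hsurj q).choose_spec
    have hsum : π (∑ t ∈ T, σ (f t) * g t) = π a := by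
      rw [map_sum]
      rw [← hf]
      refine Finset.sum_congr rfl fun t ht => ?_
      rw [map_mul, hσ, (hg t (hT ▸ subset_span ht)).2, smul_eq_mul]
    have hz : a - ∑ t ∈ T, σ (f t) * g t ∈ I := by
      apply hker
      rw [map_sub, hsum, sub_self]
    have hmem : ∑ t ∈ T, σ (f t) * g t ∈ span A ((T.image g : Finset A) : Set A) := by
      refine sum_mem fun t ht => ?_
      exact smul_mem _ _ (subset_span (by
        simp only [Finset.coe_image, Set.mem_image]
        exact ⟨t, ht, rfl⟩))
    have : a = (∑ t ∈ T, σ (f t) * g t) + (a - ∑ t ∈ T, σ (f t) * g t) := by abel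
    rw [this]
    exact add_mem (mem_sup_left hmem) (mem_sup_right hz)

set_option maxHeartbeats 1000000 in
/-- ATV core: graded left ideals containing `I` are finitely generated mod `I`. -/
lemma KL_graded
    (I : Submodule A A) (hIr : ∀ a ∈ I, ∀ b : A, a * b ∈ I) (hIgr : IsGr 𝒜 I)
    (x : A) (d : ℕ) (hd : 0 < d) (hx : x ∈ 𝒜 d)
    (hn1 : ∀ c : A, ∃ c', x * c - c' * x ∈ I)
    (hn2 : ∀ c : A, ∃ c', c * x - x * c' ∈ I)
    (HN : ∀ J : Submodule A A, I ⊔ span A {x} ≤ J →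
      ∃ S : Finset A, (S : Set A) ⊆ (J : Set A) ∧ J ≤ span A (S : Set A) ⊔ (I ⊔ span A {x}))
    (J : Submodule A A) (hJ : I ≤ J) (hJgr : IsGr 𝒜 J) :
    ∃ S : Finset A, (S : Set A) ⊆ (J : Set A) ∧ J ≤ span A (S : Set A) ⊔ I := by
  classical
  -- normality for powers of x
  have hn1pow : ∀ (n : ℕ) (c : A), ∃ c', x ^ n * c - c' * x ^ n ∈ I := by
    intro n
    induction n with
    | zero => exact fun c => ⟨c, by simp⟩
    | succ n ih =>
        intro c
        obtain ⟨c1, hc1⟩ := hn1 c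
        obtain ⟨c2, hc2⟩ := ih c1
        refine ⟨c2, ?_⟩
        have key : x ^ (n+1) * c - c2 * x ^ (n+1)
            = x ^ n * (x * c - c1 * x) + (x ^ n * c1 - c2 * x ^ n) * x := by
          rw [pow_succ]
          noncomm_ring
        rw [key]
        exact add_mem (I.smul_mem _ hc1) (hIr _ hc2 x)
  -- the ascending chain of left ideals
  set Jn : ℕ → Submodule A A := fun n =>
    { carrier := {b : A | x ^ n * b ∈ J}
      add_mem' := by
        intro a b ha hb
        simp only [Set.mem_setOf_eq, mul_add] at *
        exact add_mem ha hb
      zero_mem' := by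
        simp only [Set.mem_setOf_eq, mul_zero]
        exact zero_mem J
      smul_mem' := by
        intro c b hb
        simp only [Set.mem_setOf_eq, smul_eq_mul] at *
        obtain ⟨c', hc'⟩ := hn1pow n c
        have key : x ^ n * (c * b) = (x ^ n * c - c' * x ^ n) * b + c' * (x ^ n * b) := by
          noncomm_ring
        rw [key]
        exact add_mem (hJ (hIr _ hc' b)) (J.smul_mem c' hb) } with hJndef
  have hJnmem : ∀ n (b : A), b ∈ Jn n ↔ x ^ n * b ∈ J := fun n b => Iff.rfl
  have hJnI : ∀ n, I ≤ Jn n := by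
    intro n i hi
    show x ^ n * i ∈ J
    exact hJ (I.smul_mem _ hi)
  have hJnsucc : ∀ n, Jn n ≤ Jn (n+1) := by
    intro n b hb
    show x ^ (n+1) * b ∈ J
    have : x ^ (n+1) * b = x * (x ^ n * b) := by rw [pow_succ']; rw [mul_assoc]
    rw [this]
    exact J.smul_mem x hb
  have hmono : Monotone Jn := monotone_nat_of_le_succ hJnsucc
  have hxn : ∀ n : ℕ, x ^ n ∈ 𝒜 (n * d) := by
    intro n
    have := SetLike.pow_mem_graded n hx
    simpa [smul_eq_mul] using this
  have hJngr : ∀ n, IsGr 𝒜 (Jn n) := by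
    intro n b hb m
    show x ^ n * pj 𝒜 m b ∈ J
    rw [← pj_mul_left 𝒜 (hxn n) m b]
    exact hJgr _ hb _
  have hJtop : ∀ a ∈ J, a ∈ Jn 0 := by
    intro a ha
    show x ^ 0 * a ∈ J
    simpa using ha
  set I' : Submodule A A := I ⊔ span A {x} with hI'def
  -- stabilisation of the chain mod I'
  obtain ⟨n₀, hstab⟩ : ∃ n₀ : ℕ, ∀ n, Jn n ≤ Jn n₀ ⊔ I' := by
    have hdir : Directed (· ≤ ·) (fun n => Jn n ⊔ I') :=
      Monotone.directed_le (fun i j hij => sup_le_sup_right (hmono hij) I')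
    obtain ⟨S, hS1, hS2⟩ := HN (⨆ n, (Jn n ⊔ I'))
      (le_trans le_sup_right (le_iSup (fun n => Jn n ⊔ I') 0))
    have hex : ∀ s ∈ S, ∃ n, s ∈ Jn n ⊔ I' := by
      intro s hs
      exact (Submodule.mem_iSup_of_directed _ hdir).mp (hS1 hs)
    let ns : A → ℕ := fun s => if h : ∃ n, s ∈ Jn n ⊔ I' then h.choose else 0
    refine ⟨S.sup ns, ?_⟩
    intro n a ha
    have haK : a ∈ ⨆ n, (Jn n ⊔ I') :=
      le_iSup (fun n => Jn n ⊔ I') n (mem_sup_left ha)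
    have h2 := hS2 haK
    have hSle : span A (S : Set A) ⊔ I' ≤ Jn (S.sup ns) ⊔ I' := by
      refine sup_le (span_le.mpr ?_) le_sup_right
      intro s hs
      have h := hex s hs
      have h1 : s ∈ Jn (ns s) ⊔ I' := by
        simp only [ns, dif_pos h]
        exact h.choose_spec
      have h3 : Jn (ns s) ⊔ I' ≤ Jn (S.sup ns) ⊔ I' :=
        sup_le_sup_right (hmono (Finset.le_sup hs)) I'
      exact h3 h1
    exact hSle h2
  -- finite homogeneous generating sets mod I' at each level
  have hFn : ∀ n : ℕ, ∃ F : Finset A, (F : Set A) ⊆ (Jn n : Set A) ∧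
      (∀ f ∈ F, ∃ e, f ∈ 𝒜 e) ∧ Jn n ≤ span A (F : Set A) ⊔ I' := by
    intro n
    obtain ⟨S, hS1, hS2⟩ := HN (Jn n ⊔ I') le_sup_right
    -- replace each s by its Jn n - part
    let gs : A → A := fun s => if h : ∃ g ∈ Jn n, s - g ∈ I' then h.choose else 0
    have hgs : ∀ s ∈ S, gs s ∈ Jn n ∧ s - gs s ∈ I' := by
      intro s hs
      have h : ∃ g ∈ Jn n, s - g ∈ I' := by
        rcases mem_sup.mp (hS1 hs) with ⟨g, hg, e, he, rfl⟩
        exact ⟨g, hg, by simpa using he⟩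
      simp only [gs, dif_pos h]
      exact ⟨h.choose_spec.1, h.choose_spec.2⟩
    let F1 : Finset A := S.image gs
    have hF1sub : (F1 : Set A) ⊆ (Jn n : Set A) := by
      intro f hf
      simp only [F1, Finset.coe_image, Set.mem_image] at hf
      obtain ⟨s, hs, rfl⟩ := hf
      exact (hgs s hs).1
    have hspan1 : span A (S : Set A) ≤ span A (F1 : Set A) ⊔ I' := by
      refine span_le.mpr fun s hs => ?_
      have : s = gs s + (s - gs s) := by abel
      rw [this]
      refine add_mem (mem_sup_left (subset_span ?_)) (mem_sup_right (hgs s hs).2)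
      simp only [F1, Finset.coe_image, Set.mem_image]
      exact ⟨s, hs, rfl⟩
    -- homogenize
    let F : Finset A := F1.biUnion (fun g => comps 𝒜 g)
    refine ⟨F, ?_, ?_, ?_⟩
    · intro b hb
      simp only [F, Finset.coe_biUnion, Set.mem_iUnion] at hb
      obtain ⟨g, hg, hb⟩ := hb
      obtain ⟨m, rfl⟩ := comps_spec 𝒜 hb
      exact hJngr n g (hF1sub (by exact_mod_cast hg)) m
    · intro b hb
      simp only [F, Finset.mem_biUnion] at hb
      obtain ⟨g, hg, hb⟩ := hb
      obtain ⟨m, rfl⟩ := comps_spec 𝒜 hb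
      exact ⟨m, pj_mem 𝒜 m g⟩
    · have hspan2 : span A (F1 : Set A) ≤ span A (F : Set A) := by
        refine span_le.mpr fun g hg => ?_
        have := mem_span_comps 𝒜 g
        refine span_le.mpr ?_ this
        intro b hb
        refine subset_span ?_
        simp only [F, Finset.coe_biUnion, Set.mem_iUnion]
        exact ⟨g, by exact_mod_cast hg, hb⟩
      calc Jn n ≤ span A (S : Set A) ⊔ I' := le_sup_left.trans hS2
        _ ≤ (span A (F1 : Set A) ⊔ I') ⊔ I' := sup_le_sup_right hspan1 I'
        _ = span A (F1 : Set A) ⊔ I' := by rw [sup_assoc, sup_idem]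
        _ ≤ span A (F : Set A) ⊔ I' := sup_le_sup_right hspan2 I'
  obtain ⟨Fc, hFc⟩ := Classical.axiomOfChoice hFn
  set G : ℕ → Finset A := fun n => Fc (min n n₀) with hGdef
  have hGsub : ∀ n, (G n : Set A) ⊆ (Jn n : Set A) := by
    intro n b hb
    exact hmono (min_le_left n n₀) ((hFc (min n n₀)).1 hb)
  have hGhom : ∀ n, ∀ f ∈ G n, ∃ e, f ∈ 𝒜 e := fun n => (hFc (min n n₀)).2.1
  have hGle : ∀ n, Jn n ≤ span A ((G n : Finset A) : Set A) ⊔ I' := by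
    intro n
    rcases le_or_gt n n₀ with h | h
    · have hGn : G n = Fc n := by simp only [hGdef]; rw [min_eq_left h]
      rw [hGn]
      exact (hFc n).2.2
    · have hmin : n ⊓ n₀ = n₀ := min_eq_right h.le
      have hGn : G n = Fc n₀ := by simp only [hGdef]; rw [hmin]
      rw [hGn]
      calc Jn n ≤ Jn n₀ ⊔ I' := hstab n
        _ ≤ (span A ((Fc n₀ : Finset A) : Set A) ⊔ I') ⊔ I' :=
            sup_le_sup_right (hFc n₀).2.2 I'
        _ = span A ((Fc n₀ : Finset A) : Set A) ⊔ I' := by rw [sup_assoc, sup_idem]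
  -- one step of the division process
  have hstep : ∀ n, ∀ b ∈ Jn n, ∃ b' ∈ Jn (n+1),
      b - x * b' ∈ span A ((G n : Finset A) : Set A) ⊔ I := by
    intro n b hb
    rcases mem_sup.mp (hGle n hb) with ⟨p, hp, q, hq, hbpq⟩
    rcases mem_sup.mp hq with ⟨i, hi, z, hz, rfl⟩
    rcases mem_span_singleton.mp hz with ⟨r, hr⟩
    obtain ⟨r', hr'⟩ := hn2 r
    have hpJn : p ∈ Jn n := span_le.mpr (hGsub n) hp
    have hxr' : x * r' ∈ Jn n := by
      have : x * r' = (b - p - i) - (r * x - x * r') := by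
        rw [← hr] at hbpq
        rw [smul_eq_mul] at hbpq
        rw [← hbpq]
        abel
      rw [this]
      exact sub_mem (sub_mem (sub_mem hb hpJn) (hJnI n hi)) (hJnI n hr')
    refine ⟨r', ?_, ?_⟩
    · show x ^ (n+1) * r' ∈ J
      have : x ^ (n+1) * r' = x ^ n * (x * r') := by rw [pow_succ, mul_assoc]
      rw [this]
      exact hxr'
    · have : b - x * r' = p + (i + (r * x - x * r')) := by
        rw [← hr] at hbpq
        rw [smul_eq_mul] at hbpq
        rw [← hbpq]
        abel
      rw [this]
      exact add_mem (mem_sup_left hp) (mem_sup_right (add_mem hi hr'))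
  -- the global finite generating set
  set 𝒮 : Finset A := (Finset.range (n₀+1)).biUnion
    (fun n => (G n).image (fun f => x ^ n * f)) with h𝒮def
  have h𝒮J : ∀ s ∈ 𝒮, s ∈ J := by
    intro s hs
    simp only [𝒮, Finset.mem_biUnion, Finset.mem_image] at hs
    obtain ⟨n, -, f, hf, rfl⟩ := hs
    exact hGsub n hf
  have h𝒮hom : ∀ s ∈ (𝒮 : Set A), ∃ e, s ∈ 𝒜 e := by
    intro s hs
    simp only [𝒮, Finset.coe_biUnion, Set.mem_iUnion, Finset.mem_coe,
      Finset.mem_image] at hs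
    obtain ⟨n, -, f, hf, rfl⟩ := hs
    obtain ⟨e, he⟩ := hGhom n f hf
    exact ⟨n * d + e, SetLike.mul_mem_graded (hxn n) he⟩
  have h𝒮x : ∀ n, ∀ f ∈ G n, x ^ n * f ∈ span A ((𝒮 : Finset A) : Set A) := by
    intro n f hf
    rcases le_or_gt n n₀ with h | h
    · refine subset_span ?_
      simp only [𝒮, Finset.coe_biUnion, Set.mem_iUnion, Finset.mem_coe,
        Finset.mem_biUnion, Finset.mem_range, Finset.mem_image]
      exact ⟨n, by omega, f, hf, rfl⟩
    · have hmin : min n n₀ = n₀ := min_eq_right h.le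
      have hfn₀ : f ∈ G n₀ := by
        have : G n = G n₀ := by rw [hGdef]; simp [hmin]
        rwa [this] at hf
      have hkey : x ^ n * f = x ^ (n - n₀) • (x ^ n₀ * f) := by
        rw [smul_eq_mul, ← mul_assoc, ← pow_add]
        congr 2
        omega
      rw [hkey]
      refine smul_mem _ _ (subset_span ?_)
      simp only [𝒮, Finset.coe_biUnion, Set.mem_iUnion, Finset.mem_coe,
        Finset.mem_biUnion, Finset.mem_range, Finset.mem_image]
      exact ⟨n₀, by omega, f, hfn₀, rfl⟩
  have hLIFT : ∀ n, ∀ p ∈ span A ((G n : Finset A) : Set A) ⊔ I,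
      x ^ n * p ∈ span A ((𝒮 : Finset A) : Set A) ⊔ I := by
    intro n p hp
    rcases mem_sup.mp hp with ⟨p1, hp1, i, hi, rfl⟩
    clear hp
    rw [mul_add]
    refine add_mem ?_ (mem_sup_right (I.smul_mem _ hi))
    induction hp1 using Submodule.span_induction with
    | mem f hf => exact mem_sup_left (h𝒮x n f hf)
    | zero => rw [mul_zero]; exact zero_mem _
    | add a b _ _ iha ihb => rw [mul_add]; exact add_mem iha ihb
    | smul c q hq ih =>
        obtain ⟨c', hc'⟩ := hn1pow n c
        have key : x ^ n * (c • q) = (x ^ n * c - c' * x ^ n) * q + c' * (x ^ n * q) := by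
          rw [smul_eq_mul]
          noncomm_ring
        rw [key]
        exact add_mem (mem_sup_right (hIr _ hc' q)) (smul_mem _ c' ih)
  -- the division process
  have hITER : ∀ M : ℕ, ∀ a ∈ J, ∃ b ∈ Jn M,
      a - x ^ M * b ∈ span A ((𝒮 : Finset A) : Set A) ⊔ I := by
    intro M
    induction M with
    | zero =>
        intro a ha
        refine ⟨a, hJtop a ha, ?_⟩
        rw [pow_zero, one_mul, sub_self]
        exact zero_mem _
    | succ M ih =>
        intro a ha
        obtain ⟨b, hbJn, hb⟩ := ih a ha
        obtain ⟨b', hb'Jn, hb'⟩ := hstep M b hbJn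
        refine ⟨b', hb'Jn, ?_⟩
        have key : a - x ^ (M+1) * b' = (a - x ^ M * b) + x ^ M * (b - x * b') := by
          rw [mul_sub, ← mul_assoc, ← pow_succ]
          abel
        rw [key]
        exact add_mem hb (hLIFT M _ hb')
  -- degree cutoff: homogeneous elements of J lie in span 𝒮 ⊔ I
  have hcut : ∀ m : ℕ, ∀ h ∈ J, h ∈ 𝒜 m →
      h ∈ span A ((𝒮 : Finset A) : Set A) ⊔ I := by
    intro m h hhJ hm
    obtain ⟨b, hbJn, hb⟩ := hITER (m+1) h hhJ
    have hWgr : IsGr 𝒜 (span A ((𝒮 : Finset A) : Set A) ⊔ I) :=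
      isGr_sup 𝒜 (isGr_span 𝒜 h𝒮hom) hIgr
    have h1 := hWgr _ hb m
    have hlow : m < (m+1) * d := by
      have : m + 1 ≤ (m+1) * d := Nat.le_mul_of_pos_right _ hd
      omega
    have h2 : pj 𝒜 m (x ^ (m+1) * b) = 0 := pj_mul_left_low 𝒜 (hxn (m+1)) hlow b
    rw [pj_sub, h2, sub_zero, pj_of_mem_same 𝒜 hm] at h1
    exact h1
  -- conclusion
  refine ⟨𝒮, fun s hs => h𝒮J s hs, ?_⟩
  intro a ha
  have hcomps : ∀ b ∈ ((comps 𝒜 a : Finset A) : Set A),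
      b ∈ span A ((𝒮 : Finset A) : Set A) ⊔ I := by
    intro b hb
    obtain ⟨m, rfl⟩ := comps_spec 𝒜 (by exact_mod_cast hb)
    exact hcut m _ (hJgr a ha m) (pj_mem 𝒜 m a)
  exact span_le.mpr hcomps (mem_span_comps 𝒜 a)

set_option maxHeartbeats 1000000 in
/-- ATV main step: all left ideals containing `I` are finitely generated mod `I`. -/
lemma KL_general
    (I : Submodule A A) (hIr : ∀ a ∈ I, ∀ b : A, a * b ∈ I) (hIgr : IsGr 𝒜 I)
    (x : A) (d : ℕ) (hd : 0 < d) (hx : x ∈ 𝒜 d)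
    (hn1 : ∀ c : A, ∃ c', x * c - c' * x ∈ I)
    (hn2 : ∀ c : A, ∃ c', c * x - x * c' ∈ I)
    (HN : ∀ J : Submodule A A, I ⊔ span A {x} ≤ J →
      ∃ S : Finset A, (S : Set A) ⊆ (J : Set A) ∧ J ≤ span A (S : Set A) ⊔ (I ⊔ span A {x}))
    (J : Submodule A A) (hJ : I ≤ J) :
    ∃ S : Finset A, (S : Set A) ⊆ (J : Set A) ∧ J ≤ span A (S : Set A) ⊔ I := by
  classical
  set TopSet : Set A :=
    {h | ∃ a ∈ J, ∃ m : ℕ, (∀ j, m < j → pj 𝒜 j a = 0) ∧ h = pj 𝒜 m a} with hTopdef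
  have hTophom : ∀ h ∈ TopSet, ∃ e, h ∈ 𝒜 e := by
    rintro h ⟨a, ha, m, hm, rfl⟩
    exact ⟨m, pj_mem 𝒜 m a⟩
  set L : Submodule A A := span A TopSet ⊔ I with hLdef
  have hLgr : IsGr 𝒜 L := isGr_sup 𝒜 (isGr_span 𝒜 hTophom) hIgr
  obtain ⟨S', hS'1, hS'2⟩ := KL_graded 𝒜 I hIr hIgr x d hd hx hn1 hn2 HN L le_sup_right hLgr
  -- extract a finite subset of TopSet generating L mod I
  have hextract : ∀ s : A, ∃ T : Finset A, s ∈ S' →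
      ((T : Set A) ⊆ TopSet ∧ s ∈ span A (T : Set A) ⊔ I) := by
    intro s
    by_cases hs : s ∈ S'
    · have h1 := hS'1 hs
      rcases mem_sup.mp h1 with ⟨p, hp, i, hi, rfl⟩
      obtain ⟨T, hT1, hT2⟩ := mem_span_finite_of_mem_span hp
      exact ⟨T, fun _ => ⟨hT1, add_mem (mem_sup_left hT2) (mem_sup_right hi)⟩⟩
    · exact ⟨∅, fun h => absurd h hs⟩
  obtain ⟨Tc, hTc⟩ := Classical.axiomOfChoice hextract
  set TF : Finset A := S'.biUnion Tc with hTFdef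
  have hTF1 : (TF : Set A) ⊆ TopSet := by
    intro h hh
    simp only [TF, Finset.coe_biUnion, Set.mem_iUnion, Finset.mem_coe] at hh
    obtain ⟨s, hs, hhs⟩ := hh
    exact (hTc s hs).1 hhs
  have hLTF : L ≤ span A (TF : Set A) ⊔ I := by
    refine le_trans hS'2 (sup_le (span_le.mpr ?_) le_sup_right)
    intro s hs
    have h2 := (hTc s hs).2
    have hsub : span A ((Tc s : Finset A) : Set A) ≤ span A (TF : Set A) := by
      refine span_mono ?_
      intro b hb
      simp only [TF, Finset.coe_biUnion, Set.mem_iUnion, Finset.mem_coe]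
      exact ⟨s, hs, by exact_mod_cast hb⟩
    exact (sup_le_sup_right hsub I) h2
  -- witnesses for the elements of TF
  have hTFwit : ∀ h ∈ TF, ∃ p : A × ℕ,
      p.1 ∈ J ∧ (∀ j, p.2 < j → pj 𝒜 j p.1 = 0) ∧ h = pj 𝒜 p.2 p.1 := by
    intro h hh
    obtain ⟨a, ha, m, hm, rfl⟩ := hTF1 hh
    exact ⟨(a, m), ha, hm, rfl⟩
  let wit : A → A × ℕ := fun h =>
    if hh : ∃ p : A × ℕ, p.1 ∈ J ∧ (∀ j, p.2 < j → pj 𝒜 j p.1 = 0) ∧ h = pj 𝒜 p.2 p.1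
    then hh.choose else (0, 0)
  have hwit : ∀ h ∈ TF, (wit h).1 ∈ J ∧ (∀ j, (wit h).2 < j → pj 𝒜 j ((wit h).1) = 0)
      ∧ h = pj 𝒜 ((wit h).2) ((wit h).1) := by
    intro h hh
    have h1 := hTFwit h hh
    simp only [wit, dif_pos h1]
    exact h1.choose_spec
  set S : Finset A := TF.image (fun h => (wit h).1) with hSdef
  have hSJ : (S : Set A) ⊆ (J : Set A) := by
    intro b hb
    simp only [S, Finset.coe_image, Set.mem_image, Finset.mem_coe] at hb
    obtain ⟨h, hh, rfl⟩ := hb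
    exact (hwit h hh).1
  refine ⟨S, hSJ, ?_⟩
  -- downward induction on degrees
  have descent : ∀ m : ℕ, ∀ a ∈ J, (∀ j, m ≤ j → pj 𝒜 j a = 0) →
      a ∈ span A (S : Set A) ⊔ I := by
    intro m
    induction m with
    | zero =>
        intro a _ h0
        have : a = 0 := eq_zero_of_pj_eq_zero 𝒜 (fun j => h0 j (Nat.zero_le j))
        rw [this]
        exact zero_mem _
    | succ m ih =>
        intro a ha hhigh
        have htop : pj 𝒜 m a ∈ TopSet :=
          ⟨a, ha, m, fun j hj => hhigh j (by omega), rfl⟩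
        have hmem : pj 𝒜 m a ∈ span A (TF : Set A) ⊔ I :=
          hLTF (mem_sup_left (subset_span htop))
        rcases mem_sup.mp hmem with ⟨p, hp, i, hi, hpi⟩
        obtain ⟨f, -, hf⟩ := mem_span_finset.mp hp
        -- degrees and witnessing elements
        have htdeg : ∀ t ∈ TF, t ∈ 𝒜 ((wit t).2) := by
          intro t ht
          set w : A × ℕ := wit t with hwdef
          have h2 := (hwit t ht).2.2
          rw [h2]
          exact pj_mem 𝒜 _ _
        set ct : A → A := fun t =>
          if (wit t).2 ≤ m then pj 𝒜 (m - (wit t).2) (f t) else 0 with hctdef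
        have hctmem : ∀ t, ct t ∈ 𝒜 (m - (wit t).2) := by
          intro t
          simp only [ct]
          split
          · exact pj_mem 𝒜 _ _
          · exact zero_mem _
        have hct : ∀ t ∈ TF, pj 𝒜 m (f t • t) = ct t * t := by
          intro t ht
          rw [smul_eq_mul]
          by_cases h : (wit t).2 ≤ m
          · have heq := pj_mul_right 𝒜 (htdeg t ht) (m - (wit t).2) (f t)
            rw [show (m - (wit t).2) + (wit t).2 = m from by omega] at heq
            rw [heq]
            simp only [ct, if_pos h]
          · rw [pj_mul_right_low 𝒜 (htdeg t ht) (by omega)]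
            simp only [ct, if_neg h]
            rw [zero_mul]
        have hkey : pj 𝒜 m a = (∑ t ∈ TF, ct t * t) + pj 𝒜 m i := by
          have h1 : pj 𝒜 m (pj 𝒜 m a) = pj 𝒜 m a :=
            pj_of_mem_same 𝒜 (pj_mem 𝒜 m a)
          rw [← h1, ← hpi, pj_add, ← hf, pj_sum]
          congr 1
          exact Finset.sum_congr rfl hct
        set a' : A := a - (∑ t ∈ TF, ct t * ((wit t).1)) - pj 𝒜 m i with ha'def
        have ha'J : a' ∈ J := by
          refine sub_mem (sub_mem ha (sum_mem fun t ht => ?_)) (hJ (hIgr i hi m))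
          exact J.smul_mem _ ((hwit t ht).1)
        have ha'high : ∀ j, m ≤ j → pj 𝒜 j a' = 0 := by
          intro j hj
          have hterm : ∀ t ∈ TF, pj 𝒜 j (ct t * ((wit t).1)) =
              (if j = m then ct t * t else 0) := by
            intro t ht
            by_cases h : (wit t).2 ≤ m
            · have hjsplit : j = (m - (wit t).2) + (j - (m - (wit t).2)) := by omega
              have heq := pj_mul_left 𝒜 (hctmem t) (j - (m - (wit t).2)) ((wit t).1)
              rw [← hjsplit] at heq
              rw [heq]
              by_cases hjm : j = m
              · subst hjm
                rw [show j - (j - (wit t).2) = (wit t).2 from by omega]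
                rw [← (hwit t ht).2.2, if_pos rfl]
              · have hgt : (wit t).2 < j - (m - (wit t).2) := by omega
                rw [(hwit t ht).2.1 _ hgt, mul_zero, if_neg hjm]
            · have hz : ct t = 0 := by simp only [ct, if_neg h]
              rw [hz, zero_mul, pj_zero]
              simp
          rw [ha'def, pj_sub, pj_sub, pj_sum, Finset.sum_congr rfl hterm]
          by_cases hjm : j = m
          · subst hjm
            simp only [eq_self_iff_true, if_true]
            rw [hkey, pj_of_mem_same 𝒜 (pj_mem 𝒜 j i)]
            abel
          · have hj1 : m + 1 ≤ j := by omega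
            rw [hhigh j hj1, pj_of_mem_ne 𝒜 (pj_mem 𝒜 m i) (Ne.symm hjm)]
            simp only [if_neg hjm]
            simp
        have ha'mem := ih a' ha'J ha'high
        have hrec : a = a' + (∑ t ∈ TF, ct t * ((wit t).1)) + pj 𝒜 m i := by
          rw [ha'def]; abel
        rw [hrec]
        refine add_mem (add_mem ha'mem (mem_sup_left (sum_mem fun t ht => ?_)))
          (mem_sup_right (hIgr i hi m))
        refine smul_mem _ _ (subset_span ?_)
        simp only [S, Finset.coe_image, Set.mem_image, Finset.mem_coe]
        exact ⟨t, ht, rfl⟩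
  intro a ha
  obtain ⟨M, hM⟩ := pj_exists_bound 𝒜 a
  exact descent M a ha hM

/-- For a right-stable left ideal, the two-sided span of a generating set has the
same elements as the left span. -/
lemma span_eq_twosided {T : Set A} (hT : ∀ a ∈ span A T, ∀ b : A, a * b ∈ span A T)
    (a : A) : a ∈ TwoSidedIdeal.span T ↔ a ∈ span A T := by
  constructor
  · intro h
    have hI := TwoSidedIdeal.mem_span_iff.mp h (TwoSidedIdeal.mk' ((span A T : Submodule A A) : Set A)
        (zero_mem _) (fun h1 h2 => add_mem h1 h2) (fun h1 => neg_mem h1)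
        (fun {x y} hy => Submodule.smul_mem _ x hy) (fun {x y} hx => hT x hx y)) ?_
    · rwa [TwoSidedIdeal.mem_mk'] at hI
    · intro t ht
      rw [SetLike.mem_coe, TwoSidedIdeal.mem_mk']
      exact subset_span ht
  · intro h
    refine Submodule.span_induction ?_ ?_ ?_ ?_ h
    · exact fun t ht => TwoSidedIdeal.subset_span ht
    · exact zero_mem _
    · exact fun a b _ _ ha hb => add_mem ha hb
    · intro c a _ ha
      rw [smul_eq_mul]
      exact TwoSidedIdeal.mul_mem_left _ _ _ ha

end ATV

set_option maxHeartbeats 1000000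

/-- If `A` is a connected `ℕ`-graded `k`-algebra with a normalising sequence
`u_1, …, u_N` of homogeneous elements of positive degree (each `u_l` is normal modulo the
two-sided ideal generated by the previous ones) such that `A/⟨u_1,…,u_N⟩` is noetherian,
then `A` is noetherian. -/
theorem stmt17 {k A : Type*} [Field k] [Ring A] [Algebra k A]
    (𝒜 : ℕ → Submodule k A) [GradedAlgebra 𝒜]
    (hconn : 𝒜 0 = (1 : Submodule k A))
    (N : ℕ) (u : Fin N → A)
    (hhom : ∀ l : Fin N, ∃ d : ℕ, 0 < d ∧ u l ∈ 𝒜 d)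
    (hnorm : ∀ l : Fin N, ∀ r : A,
      (∃ s : A, u l * r - s * u l ∈ TwoSidedIdeal.span {x : A | ∃ j : Fin N, j < l ∧ x = u j}) ∧
      (∃ s : A, r * u l - u l * s ∈ TwoSidedIdeal.span {x : A | ∃ j : Fin N, j < l ∧ x = u j}))
    (hquot : IsNoetherianRing ((TwoSidedIdeal.span (Set.range u)).ringCon.Quotient)) :
    IsNoetherianRing A := by
  classical
  set Us : ℕ → Set A := fun l => {a | ∃ j : Fin N, (j : ℕ) < l ∧ a = u j} with hUs
  set M : ℕ → Submodule A A := fun l => span A (Us l) with hMdef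
  -- the index set in `hnorm` agrees with `Us (j : ℕ)`
  have hsets : ∀ j : Fin N, {x : A | ∃ j' : Fin N, j' < j ∧ x = u j'} = Us ((j : ℕ)) := by
    intro j
    ext a
    simp only [hUs, Set.mem_setOf_eq, Fin.lt_def]
  -- right stability and agreement of two-sided and left spans
  have key : ∀ l : ℕ, (∀ a ∈ M l, ∀ b : A, a * b ∈ M l) ∧
      (∀ a : A, a ∈ TwoSidedIdeal.span (Us l) ↔ a ∈ M l) := by
    intro l
    induction l with
    | zero =>
        have h0 : Us 0 = ∅ := by
          ext a
          simp [hUs]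
        have hr : ∀ a ∈ M 0, ∀ b : A, a * b ∈ M 0 := by
          intro a ha b
          simp only [hMdef, h0, span_empty, mem_bot] at ha ⊢
          rw [ha, zero_mul]
        exact ⟨hr, fun a => span_eq_twosided (fun a ha b => hr a ha b) a⟩
    | succ l ih =>
        obtain ⟨ihr, iheq⟩ := ih
        have hUmono : Us l ⊆ Us (l+1) := by
          rintro a ⟨j, hj, rfl⟩
          exact ⟨j, by omega, rfl⟩
        have hMmono : M l ≤ M (l+1) := span_mono hUmono
        have hr : ∀ a ∈ M (l+1), ∀ b : A, a * b ∈ M (l+1) := by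
          intro a ha b
          induction ha using Submodule.span_induction with
          | mem t ht =>
              obtain ⟨j, hj, rfl⟩ := ht
              by_cases hjl : (j : ℕ) < l
              · exact hMmono (ihr (u j) (subset_span ⟨j, hjl, rfl⟩) b)
              · have hje : (j : ℕ) = l := by omega
                obtain ⟨s, hs⟩ := (hnorm j b).1
                rw [hsets j, hje] at hs
                have h1 : u j * b - s * u j ∈ M (l+1) := hMmono ((iheq _).mp hs)
                have h2 : s * u j ∈ M (l+1) :=
                  Submodule.smul_mem _ s (subset_span ⟨j, by omega, rfl⟩)
                have : u j * b = (u j * b - s * u j) + s * u j := by abel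
                rw [this]
                exact add_mem h1 h2
          | zero => rw [zero_mul]; exact zero_mem _
          | add a₁ a₂ _ _ h1 h2 => rw [add_mul]; exact add_mem h1 h2
          | smul c q _ hq =>
              rw [smul_eq_mul, mul_assoc]
              exact Submodule.smul_mem _ c hq
        exact ⟨hr, fun a => span_eq_twosided (fun a ha b => hr a ha b) a⟩
  -- gradedness of M l
  have hMgr : ∀ l, IsGr 𝒜 (M l) := by
    intro l
    refine isGr_span 𝒜 ?_
    rintro s ⟨j, hj, rfl⟩
    obtain ⟨d, -, hd⟩ := hhom j
    exact ⟨d, hd⟩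
  -- downward induction
  have main : ∀ i : ℕ, i ≤ N → ∀ J : Submodule A A, M (N - i) ≤ J →
      ∃ S : Finset A, (S : Set A) ⊆ (J : Set A) ∧ J ≤ span A (S : Set A) ⊔ M (N - i) := by
    intro i
    induction i with
    | zero =>
        intro _ J hJ
        have hrange : Set.range u = Us N := by
          ext a
          simp only [hUs, Set.mem_range, Set.mem_setOf_eq]
          constructor
          · rintro ⟨j, rfl⟩
            exact ⟨j, j.2, rfl⟩
          · rintro ⟨j, -, rfl⟩
            exact ⟨j, rfl⟩
        simp only [Nat.sub_zero] at hJ ⊢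
        refine fg_mod_of_quot_noetherian hquot ?_ J hJ
        intro a
        rw [hrange]
        exact (key N).2 a
    | succ i ih =>
        intro hiN J hJle
        have hlN : N - (i + 1) < N := by omega
        set j₀ : Fin N := ⟨N - (i + 1), hlN⟩ with hj₀
        set l : ℕ := N - (i + 1) with hl
        have hj₀l : (j₀ : ℕ) = l := rfl
        have hstep : N - i = l + 1 := by omega
        obtain ⟨d, hd, hdu⟩ := hhom j₀
        have hn1 : ∀ c : A, ∃ c', u j₀ * c - c' * u j₀ ∈ M l := by
          intro c
          obtain ⟨s, hs⟩ := (hnorm j₀ c).1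
          rw [hsets j₀] at hs
          exact ⟨s, (key l).2 _ |>.mp hs⟩
        have hn2 : ∀ c : A, ∃ c', c * u j₀ - u j₀ * c' ∈ M l := by
          intro c
          obtain ⟨s, hs⟩ := (hnorm j₀ c).2
          rw [hsets j₀] at hs
          exact ⟨s, (key l).2 _ |>.mp hs⟩
        have hMsup : M (l + 1) = M l ⊔ span A {u j₀} := by
          have hUsup : Us (l + 1) = Us l ∪ {u j₀} := by
            ext a
            constructor
            · rintro ⟨j, hj, rfl⟩
              by_cases hjl : (j : ℕ) < l
              · exact Or.inl ⟨j, hjl, rfl⟩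
              · have : j = j₀ := Fin.ext (by rw [hj₀l]; omega)
                rw [this]
                exact Or.inr rfl
            · rintro (⟨j, hj, rfl⟩ | ha)
              · exact ⟨j, by omega, rfl⟩
              · rw [ha]
                exact ⟨j₀, by rw [hj₀l]; omega, rfl⟩
          rw [hMdef]
          simp only
          rw [hUsup, Submodule.span_union]
        have HN : ∀ K : Submodule A A, M l ⊔ span A {u j₀} ≤ K →
            ∃ S : Finset A, (S : Set A) ⊆ (K : Set A) ∧
              K ≤ span A (S : Set A) ⊔ (M l ⊔ span A {u j₀}) := by
          intro K hK
          rw [← hMsup] at hK ⊢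
          rw [← hstep] at hK ⊢
          exact ih (by omega) K hK
        exact KL_general 𝒜 (M l) (key l).1 (hMgr l) (u j₀) d hd hdu hn1 hn2 HN J hJle
  have hM0 : M 0 = ⊥ := by
    have h0 : Us 0 = ∅ := by
      ext a
      simp [hUs]
    rw [hMdef]
    simp only
    rw [h0, span_empty]
  rw [isNoetherianRing_iff, isNoetherian_def]
  intro J
  obtain ⟨S, hS1, hS2⟩ := main N (le_refl N) J (by rw [Nat.sub_self, hM0]; exact bot_le)
  rw [Nat.sub_self, hM0, sup_bot_eq] at hS2
  exact ⟨S, le_antisymm (span_le.mpr hS1) hS2⟩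
end
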